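/- arXiv:1804.01442 — 7 statements merged into one kernel-verified Lean document; each statement's English description precedes it below -/
import Mathlib

section
/- Fix real numbers a, b with 1 < a < b. Then the limit inferior of Q(a,b;t) as t tends to b from the right is strictly positive; equivalently, there exist ε > 0 and δ > 0 such that Q(a,b;t) > ε for all t with b < t < b + δ. -/
open MeasureTheory intervalIntegral Real Filter Topology

private lemma ae_ne' (l : ℝ) : ∀ᵐ z : ℝ, z ≠ l := by
  rw [MeasureTheory.ae_iff]
  have h : {z : ℝ | ¬ z ≠ l} = {l} := by ext z; simp
  rw [h]; exact measure_singleton l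

private lemma prod2_le {x1 x2 y1 y2 : ℝ} (h1 : 0 ≤ x1) (h2 : 0 ≤ x2)
    (g1 : x1 ≤ y1) (g2 : x2 ≤ y2) : x1 * x2 ≤ y1 * y2 :=
  mul_le_mul g1 g2 h2 (h1.trans g1)

private lemma prod3_le {x1 x2 x3 y1 y2 y3 : ℝ} (h1 : 0 ≤ x1) (h2 : 0 ≤ x2) (h3 : 0 ≤ x3)
    (g1 : x1 ≤ y1) (g2 : x2 ≤ y2) (g3 : x3 ≤ y3) : x1 * x2 * x3 ≤ y1 * y2 * y3 :=
  prod2_le (mul_nonneg h1 h2) h3 (prod2_le h1 h2 g1 g2) g3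

private lemma prod4_le {x1 x2 x3 x4 y1 y2 y3 y4 : ℝ} (h1 : 0 ≤ x1) (h2 : 0 ≤ x2) (h3 : 0 ≤ x3)
    (h4 : 0 ≤ x4) (g1 : x1 ≤ y1) (g2 : x2 ≤ y2) (g3 : x3 ≤ y3) (g4 : x4 ≤ y4) :
    x1 * x2 * x3 * x4 ≤ y1 * y2 * y3 * y4 :=
  prod2_le (mul_nonneg (mul_nonneg h1 h2) h3) h4 (prod3_le h1 h2 h3 g1 g2 g3) g4

private lemma prod5_le {x1 x2 x3 x4 x5 y1 y2 y3 y4 y5 : ℝ} (h1 : 0 ≤ x1) (h2 : 0 ≤ x2)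
    (h3 : 0 ≤ x3) (h4 : 0 ≤ x4) (h5 : 0 ≤ x5) (g1 : x1 ≤ y1) (g2 : x2 ≤ y2) (g3 : x3 ≤ y3)
    (g4 : x4 ≤ y4) (g5 : x5 ≤ y5) : x1 * x2 * x3 * x4 * x5 ≤ y1 * y2 * y3 * y4 * y5 :=
  prod2_le (mul_nonneg (mul_nonneg (mul_nonneg h1 h2) h3) h4) h5
    (prod4_le h1 h2 h3 h4 g1 g2 g3 g4) g5

private lemma sqrt_bound {N D Y Cnum Cden : ℝ} (hD : 0 < D) (hY : 0 < Y) (hCden : 0 < Cden)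
    (h : N * Y * Cden ≤ Cnum * D) : Real.sqrt (N / D) ≤ Real.sqrt ((Cnum / Cden) / Y) := by
  apply Real.sqrt_le_sqrt
  rw [div_div, div_le_div_iff₀ hD (by positivity)]
  linear_combination h

private lemma sqrt_lower {P Q N D : ℝ} (hP : 0 ≤ P) (hPN : P ≤ N) (hD : 0 < D) (hQ : D ≤ Q) :
    Real.sqrt (P / Q) ≤ Real.sqrt (N / D) :=
  Real.sqrt_le_sqrt (div_le_div₀ (hP.trans hPN) hPN hD hQ)

private lemma sqrt_inv_bound {c N D u : ℝ} (hc : 0 ≤ c) (hu : 0 < u) (hD : 0 < D)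
    (h : c * D ≤ N * u ^ 2) : Real.sqrt c * u⁻¹ ≤ Real.sqrt (N / D) := by
  have h2 : Real.sqrt c * u⁻¹ = Real.sqrt (c / u ^ 2) := by
    rw [Real.sqrt_div hc, Real.sqrt_sq hu.le, div_eq_mul_inv]
  rw [h2]
  apply Real.sqrt_le_sqrt
  rw [div_le_div_iff₀ (by positivity) hD]
  linarith

/-- Singularity at the left endpoint. -/
private lemma lemA {l r C : ℝ} (f : ℝ → ℝ) (hlr : l < r) (hC : 0 ≤ C)
    (hmeas : Measurable f) (h0 : ∀ z, 0 ≤ f z)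
    (hb : ∀ z, l < z → z ≤ r → f z ≤ Real.sqrt (C / (z - l))) :
    IntervalIntegrable f volume l r ∧
      (∫ z in l..r, f z) ≤ 2 * Real.sqrt C * Real.sqrt (r - l) := by
  set g : ℝ → ℝ := fun z => Real.sqrt C * (z - l) ^ (-(1/2) : ℝ) with hg
  have hgeq : ∀ z : ℝ, l < z → g z = Real.sqrt (C / (z - l)) := by
    intro z hz
    have h1 : (0:ℝ) < z - l := by linarith
    rw [hg]
    simp only []
    rw [Real.sqrt_div hC, Real.sqrt_eq_rpow (z - l), Real.rpow_neg h1.le]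
    exact (div_eq_mul_inv _ _).symm
  have hgint : IntervalIntegrable g volume l r := by
    have h1 : IntervalIntegrable (fun x : ℝ => x ^ (-(1/2):ℝ)) volume 0 (r - l) :=
      intervalIntegral.intervalIntegrable_rpow' (by norm_num)
    have h2 := (h1.comp_sub_right l).const_mul (Real.sqrt C)
    have h3 : (0:ℝ) + l = l := by ring
    have h4 : r - l + l = r := by ring
    rw [h3, h4] at h2
    exact h2
  have hfint : IntervalIntegrable f volume l r := by
    rw [intervalIntegrable_iff, Set.uIoc_of_le hlr.le]
    have hgi : MeasureTheory.IntegrableOn g (Set.Ioc l r) := by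
      rw [intervalIntegrable_iff, Set.uIoc_of_le hlr.le] at hgint; exact hgint
    apply MeasureTheory.Integrable.mono hgi (hmeas.aestronglyMeasurable.restrict)
    filter_upwards [MeasureTheory.ae_restrict_mem measurableSet_Ioc] with z hz
    have h1 : l < z := hz.1
    have h2 : 0 ≤ g z := by rw [hgeq z h1]; exact Real.sqrt_nonneg _
    rw [Real.norm_of_nonneg (h0 z), Real.norm_of_nonneg h2, hgeq z h1]
    exact hb z h1 hz.2
  refine ⟨hfint, ?_⟩
  have hmono : (∫ z in l..r, f z) ≤ ∫ z in l..r, g z := by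
    apply intervalIntegral.integral_mono_ae_restrict hlr.le hfint hgint
    filter_upwards [MeasureTheory.ae_restrict_mem measurableSet_Icc,
      MeasureTheory.ae_restrict_of_ae (ae_ne' l)] with z hz hne
    have h1 : l < z := lt_of_le_of_ne hz.1 (Ne.symm hne)
    rw [hgeq z h1]; exact hb z h1 hz.2
  have hgval : (∫ z in l..r, g z) = Real.sqrt C * (2 * Real.sqrt (r - l)) := by
    rw [hg]
    simp only []
    rw [intervalIntegral.integral_const_mul]
    have h1 := intervalIntegral.integral_comp_sub_right (a := l) (b := r)
      (fun x : ℝ => x ^ (-(1/2):ℝ)) l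
    simp only [sub_self] at h1
    rw [h1, integral_rpow (Or.inl (by norm_num)), Real.zero_rpow (by norm_num)]
    have h9 : -(1/2 : ℝ) + 1 = 1/2 := by norm_num
    rw [h9, ← Real.sqrt_eq_rpow]
    ring
  calc (∫ z in l..r, f z) ≤ ∫ z in l..r, g z := hmono
    _ = 2 * Real.sqrt C * Real.sqrt (r - l) := by rw [hgval]; ring

/-- Singularity at the right endpoint. -/
private lemma lemB {l r C : ℝ} (f : ℝ → ℝ) (hlr : l < r) (hC : 0 ≤ C)
    (hmeas : Measurable f) (h0 : ∀ z, 0 ≤ f z)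
    (hb : ∀ z, l ≤ z → z < r → f z ≤ Real.sqrt (C / (r - z))) :
    IntervalIntegrable f volume l r ∧
      (∫ z in l..r, f z) ≤ 2 * Real.sqrt C * Real.sqrt (r - l) := by
  set F : ℝ → ℝ := fun z => f (l + r - z) with hF
  have hFb : ∀ z, l < z → z ≤ r → F z ≤ Real.sqrt (C / (z - l)) := by
    intro z h1 h2
    have h3 : C / (z - l) = C / (r - (l + r - z)) := by ring_nf
    rw [h3]
    exact hb _ (by linarith) (by linarith)
  obtain ⟨hFint, hFle⟩ := lemA F hlr hC (hmeas.comp (measurable_const.sub measurable_id))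
    (fun z => h0 _) hFb
  have hfint : IntervalIntegrable f volume l r := by
    have h2 := hFint.comp_sub_left (l + r)
    simp only [hF, sub_sub_cancel] at h2
    have h3 : l + r - l = r := by ring
    have h4 : l + r - r = l := by ring
    rw [h3, h4] at h2
    exact h2.symm
  refine ⟨hfint, ?_⟩
  have h5 : (∫ z in l..r, f z) = ∫ z in l..r, F z := by
    have h6 := intervalIntegral.integral_comp_sub_left (a := l) (b := r) F (l + r)
    have h7 : l + r - r = l := by ring
    have h8 : l + r - l = r := by ring
    rw [h7, h8] at h6
    rw [← h6]
    congr 1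
    ext z
    simp only [hF, sub_sub_cancel]
  rw [h5]
  exact hFle

/-- Two-sided singular bound: integrability and integral bound `4√C`. -/
private lemma lemC {l r C : ℝ} (f : ℝ → ℝ) (hlr : l < r) (hC : 0 ≤ C)
    (hmeas : Measurable f) (h0 : ∀ z, 0 ≤ f z)
    (hb : ∀ z, l < z → z < r → f z ≤ Real.sqrt (C / ((z - l) * (r - z)))) :
    IntervalIntegrable f volume l r ∧ (∫ z in l..r, f z) ≤ 4 * Real.sqrt C := by
  set m : ℝ := (l + r) / 2 with hm
  have hlm : l < m := by rw [hm]; linarith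
  have hmr : m < r := by rw [hm]; linarith
  set C1 : ℝ := C * (2 / (r - l)) with hC1
  have hrl : (0:ℝ) < r - l := by linarith
  have hC1nn : 0 ≤ C1 := by
    rw [hC1]; positivity
  have hC1m : C1 * ((r - l) / 2) = C := by
    have h := hrl.ne'
    rw [hC1]; field_simp
  have hleft : IntervalIntegrable f volume l m ∧
      (∫ z in l..m, f z) ≤ 2 * Real.sqrt C1 * Real.sqrt (m - l) := by
    apply lemA f hlm hC1nn hmeas h0
    intro z h1 h2
    refine (hb z h1 (by linarith)).trans (Real.sqrt_le_sqrt ?_)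
    have h3 : (0:ℝ) < z - l := by linarith
    have h4 : (0:ℝ) < r - z := by rw [hm] at h2; linarith
    rw [div_le_div_iff₀ (by positivity) h3]
    have h5 : C ≤ C1 * (r - z) := by
      rw [← hC1m]
      apply mul_le_mul_of_nonneg_left _ hC1nn
      rw [hm] at h2; linarith
    nlinarith [mul_le_mul_of_nonneg_right h5 h3.le]
  have hright : IntervalIntegrable f volume m r ∧
      (∫ z in m..r, f z) ≤ 2 * Real.sqrt C1 * Real.sqrt (r - m) := by
    apply lemB f hmr hC1nn hmeas h0
    intro z h1 h2
    refine (hb z (by linarith) h2).trans (Real.sqrt_le_sqrt ?_)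
    have h3 : (0:ℝ) < z - l := by linarith
    have h4 : (0:ℝ) < r - z := by linarith
    rw [div_le_div_iff₀ (by positivity) h4]
    have h5 : C ≤ C1 * (z - l) := by
      rw [← hC1m]
      apply mul_le_mul_of_nonneg_left _ hC1nn
      rw [hm] at h1; linarith
    nlinarith [mul_le_mul_of_nonneg_right h5 h4.le]
  have hint : IntervalIntegrable f volume l r := hleft.1.trans hright.1
  refine ⟨hint, ?_⟩
  have hval : Real.sqrt C1 * Real.sqrt ((r - l) / 2) = Real.sqrt C := by
    rw [← Real.sqrt_mul hC1nn, hC1m]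
  have hml : m - l = (r - l) / 2 := by rw [hm]; ring
  have hrm : r - m = (r - l) / 2 := by rw [hm]; ring
  have hadd := intervalIntegral.integral_add_adjacent_intervals hleft.1 hright.1
  rw [← hadd]
  have e1 := hleft.2
  have e2 := hright.2
  rw [hml] at e1
  rw [hrm] at e2
  nlinarith [e1, e2, hval]

/-- Lower bound by a constant on a subinterval. -/
private lemma lemD {l r c d m0 : ℝ} (f : ℝ → ℝ) (hlc : l ≤ c) (hcd : c ≤ d) (hdr : d ≤ r)
    (hf : IntervalIntegrable f volume l r) (h0 : ∀ z, 0 ≤ f z)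
    (hmm : ∀ z ∈ Set.Icc c d, m0 ≤ f z) : m0 * (d - c) ≤ ∫ z in l..r, f z := by
  have hlr : l ≤ r := le_trans hlc (le_trans hcd hdr)
  have hsub : ∀ x y : ℝ, l ≤ x → x ≤ y → y ≤ r → Set.uIcc x y ⊆ Set.uIcc l r := by
    intro x y hx hxy hyr
    rw [Set.uIcc_of_le hxy, Set.uIcc_of_le hlr]
    exact Set.Icc_subset_Icc hx hyr
  have h1 : IntervalIntegrable f volume l c := hf.mono_set (hsub l c le_rfl hlc (hcd.trans hdr))
  have h2 : IntervalIntegrable f volume c d := hf.mono_set (hsub c d hlc hcd hdr)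
  have h3 : IntervalIntegrable f volume d r := hf.mono_set (hsub d r (hlc.trans hcd) hdr le_rfl)
  have e1 := intervalIntegral.integral_add_adjacent_intervals h1 h2
  have e2 := intervalIntegral.integral_add_adjacent_intervals (h1.trans h2) h3
  have b1 : 0 ≤ ∫ z in l..c, f z := intervalIntegral.integral_nonneg hlc fun u _ => h0 u
  have b3 : 0 ≤ ∫ z in d..r, f z := intervalIntegral.integral_nonneg hdr fun u _ => h0 u
  have b2 : m0 * (d - c) ≤ ∫ z in c..d, f z := by
    have h4 : (∫ _ in c..d, m0) = m0 * (d - c) := by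
      rw [intervalIntegral.integral_const]; simp [smul_eq_mul]; ring
    rw [← h4]
    exact intervalIntegral.integral_mono_on hcd intervalIntegrable_const h2 hmm
  linarith


/-- Period integral `I₁`. -/
noncomputable def I1 (a b t : ℝ) : ℝ :=
  ∫ z in (-t)..(-a), Real.sqrt ((b - z) / ((t ^ 2 - z ^ 2) * (z ^ 2 - 1) * (-z - a)))

/-- Period integral `J₁`. -/
noncomputable def J1 (a b t : ℝ) : ℝ :=
  ∫ z in (-t)..(-a), Real.sqrt ((-z - a) / ((t ^ 2 - z ^ 2) * (z ^ 2 - 1) * (b - z)))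

/-- Period integral `I₂`. -/
noncomputable def I2 (a b t : ℝ) : ℝ :=
  ∫ z in (-a)..(-1), Real.sqrt ((b - z) / ((t ^ 2 - z ^ 2) * (z ^ 2 - 1) * (z + a)))

/-- Period integral `J₂`. -/
noncomputable def J2 (a b t : ℝ) : ℝ :=
  ∫ z in (-a)..(-1), Real.sqrt ((z + a) / ((t ^ 2 - z ^ 2) * (z ^ 2 - 1) * (b - z)))

/-- Period integral `I₄`. -/
noncomputable def I4 (a b t : ℝ) : ℝ :=
  ∫ z in (1:ℝ)..b, Real.sqrt ((b - z) / ((t ^ 2 - z ^ 2) * (z ^ 2 - 1) * (z + a)))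

/-- Period integral `J₄`. -/
noncomputable def J4 (a b t : ℝ) : ℝ :=
  ∫ z in (1:ℝ)..b, Real.sqrt ((z + a) / ((t ^ 2 - z ^ 2) * (z ^ 2 - 1) * (b - z)))

/-- Period integral `I₅`. -/
noncomputable def I5 (a b t : ℝ) : ℝ :=
  ∫ z in b..t, Real.sqrt ((z - b) / ((t ^ 2 - z ^ 2) * (z ^ 2 - 1) * (z + a)))

/-- Period integral `J₅`. -/
noncomputable def J5 (a b t : ℝ) : ℝ :=
  ∫ z in b..t, Real.sqrt ((z + a) / ((t ^ 2 - z ^ 2) * (z ^ 2 - 1) * (z - b)))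

/-- The period quotient `Q(a,b;t)`. -/
noncomputable def Q (a b t : ℝ) : ℝ :=
  (I1 a b t + I5 a b t) / (I2 a b t + I4 a b t)
    - (J1 a b t + J5 a b t) / (J2 a b t + J4 a b t)

set_option maxHeartbeats 2000000 in
/-- The limit inferior of `Q(a,b;t)` as `t → b⁺` is strictly positive: there are `ε, δ > 0`
with `Q(a,b;t) > ε` for all `b < t < b + δ`. -/
theorem stmt2 (a b : ℝ) (ha : 1 < a) (hab : a < b) :
    ∃ ε > (0:ℝ), ∃ δ > (0:ℝ), ∀ t : ℝ, b < t → t < b + δ → Q a b t > ε := by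
  have hb1 : 1 < b := ha.trans hab
  have ha0 : 0 < a := by linarith
  have hb0 : 0 < b := by linarith
  have ha2 : 0 < a ^ 2 - 1 := by nlinarith
  have hb2 : 0 < b ^ 2 - 1 := by nlinarith
  set T : ℝ := b + 1 with hT
  have hT0 : 0 < T := by rw [hT]; linarith
  have hTa : a < T := by rw [hT]; linarith
  set s : ℝ := b - a with hs
  have hs0 : 0 < s := by rw [hs]; linarith
  -- constants for upper bounds
  set C2 : ℝ := (b + a) / ((b + 1) * (b - a) * 2) with hC2
  set C4 : ℝ := (b - 1) / ((b + 1) * 2 * (1 + a)) with hC4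
  set CJ1 : ℝ := ((T - a) * (T - a)) / ((a + b) * (a ^ 2 - 1) * (a + b)) with hCJ1
  set CJ5 : ℝ := (T + a) / ((2 * b) * (b ^ 2 - 1)) with hCJ5
  set CI1 : ℝ := (b + T) / ((a + b) * (a ^ 2 - 1)) with hCI1
  have hC2pos : 0 < C2 := by
    rw [hC2]; exact div_pos (by linarith) (mul_pos (mul_pos (by linarith) (by linarith)) two_pos)
  have hC4pos : 0 < C4 := by
    rw [hC4]; exact div_pos (by linarith) (mul_pos (mul_pos (by linarith) two_pos) (by linarith))
  have hCJ1pos : 0 < CJ1 := by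
    rw [hCJ1]
    exact div_pos (mul_pos (by linarith) (by linarith))
      (mul_pos (mul_pos (by linarith) ha2) (by linarith))
  have hCJ5pos : 0 < CJ5 := by
    rw [hCJ5]; exact div_pos (by linarith) (mul_pos (by linarith) hb2)
  have hCI1pos : 0 < CI1 := by
    rw [hCI1]; exact div_pos (by linarith) (mul_pos (by linarith) ha2)
  -- lower bound constants
  set m1 : ℝ := Real.sqrt ((a + b) / (T ^ 2 * b ^ 2 * s)) * (s / 4) with hm1
  set m2 : ℝ := Real.sqrt ((b + 1) / (T ^ 2 * (a ^ 2 - 1) * a)) * ((a - 1) / 4) with hm2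
  have hm1pos : 0 < m1 := by
    rw [hm1]
    apply mul_pos _ (by linarith)
    apply Real.sqrt_pos.mpr
    apply div_pos (by linarith) (by positivity)
  have hm2pos : 0 < m2 := by
    rw [hm2]
    apply mul_pos _ (by linarith)
    apply Real.sqrt_pos.mpr
    apply div_pos (by linarith) (by positivity)
  set MB : ℝ := 4 * Real.sqrt C2 + 4 * Real.sqrt C4 with hMB
  set M2 : ℝ := 4 * Real.sqrt CJ1 + 4 * Real.sqrt CJ5 with hM2
  have hMBpos : 0 < MB := by
    rw [hMB]
    have := Real.sqrt_pos.mpr hC2pos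
    have := Real.sqrt_pos.mpr hC4pos
    linarith
  have hM2pos : 0 < M2 := by
    rw [hM2]
    have := Real.sqrt_pos.mpr hCJ1pos
    have := Real.sqrt_pos.mpr hCJ5pos
    linarith
  set clow : ℝ := (1 + a) / ((T + b) * (b ^ 2 - 1)) with hclow
  have hclowpos : 0 < clow := by
    rw [hclow]; exact div_pos (by linarith) (mul_pos (by linarith) hb2)
  have hsclow : 0 < Real.sqrt clow := Real.sqrt_pos.mpr hclowpos
  set c : ℝ := (1 + b) / 2 with hc
  have hc1 : 1 < c := by rw [hc]; linarith
  have hcb : c < b := by rw [hc]; linarith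
  set L : ℝ := 2 * M2 * MB / m1 with hL
  have hLpos : 0 < L := by
    rw [hL]; exact div_pos (by linarith only [mul_pos hM2pos hMBpos]) hm1pos
  set ε : ℝ := m1 / (2 * MB) with hε
  have hεpos : 0 < ε := by rw [hε]; apply div_pos hm1pos (by linarith)
  set δ : ℝ := min 1 ((b - c) * Real.exp (-(L / Real.sqrt clow))) with hδ
  have hδpos : 0 < δ := by
    rw [hδ]
    apply lt_min one_pos
    apply mul_pos (by linarith) (Real.exp_pos _)
  refine ⟨ε, hεpos, δ, hδpos, ?_⟩
  intro t ht1 ht2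
  have htT : t < T := by
    have h := min_le_left 1 ((b - c) * Real.exp (-(L / Real.sqrt clow)))
    rw [hδ] at ht2
    rw [hT]
    linarith
  have ht2' : t - b < (b - c) * Real.exp (-(L / Real.sqrt clow)) := by
    have h := min_le_right 1 ((b - c) * Real.exp (-(L / Real.sqrt clow)))
    rw [hδ] at ht2
    linarith
  have hat : a < t := by linarith
  -- ============ I1 : integrability and lower bound ============
  have hbI1 : ∀ z : ℝ, -t < z → z < -a →
      Real.sqrt ((b - z) / ((t ^ 2 - z ^ 2) * (z ^ 2 - 1) * (-z - a))) ≤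
      Real.sqrt (CI1 / ((z - -t) * (-a - z))) := by
    intro z h1 h2
    have hz1 : 0 < z + t := by linarith
    have hz2 : 0 < -a - z := by linarith
    have hz3 : a + b ≤ t - z := by linarith
    have hz5 : 0 < z ^ 2 - 1 := by linarith only [mul_pos (show (0:ℝ) < -1 - z by linarith) (show (0:ℝ) < 1 - z by linarith)]
    have hz6 : 0 < t ^ 2 - z ^ 2 := by linarith only [mul_pos (show (0:ℝ) < t - z by linarith) hz1]
    have hD : 0 < (t ^ 2 - z ^ 2) * (z ^ 2 - 1) * (-z - a) :=
      mul_pos (mul_pos hz6 hz5) (by linarith)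
    rw [hCI1]
    apply sqrt_bound hD (mul_pos (by linarith) hz2) (mul_pos (by linarith) ha2)
    calc (b - z) * ((z - -t) * (-a - z)) * ((a + b) * (a ^ 2 - 1))
        = ((b - z) * (a + b) * (a ^ 2 - 1)) * ((z + t) * (-a - z)) := by ring
      _ ≤ ((b + T) * (t - z) * (z ^ 2 - 1)) * ((z + t) * (-a - z)) := by
          apply mul_le_mul_of_nonneg_right _ (mul_nonneg hz1.le hz2.le)
          exact prod3_le (by linarith) (by linarith) ha2.le
            (by linarith) hz3 (by linarith only [mul_nonneg (show (0:ℝ) ≤ -a - z by linarith) (show (0:ℝ) ≤ a - z by linarith)])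
      _ = (b + T) * ((t ^ 2 - z ^ 2) * (z ^ 2 - 1) * (-z - a)) := by ring
  have hI1C := lemC (fun z : ℝ => Real.sqrt ((b - z) / ((t ^ 2 - z ^ 2) * (z ^ 2 - 1) * (-z - a))))
    (show -t < -a by linarith) hCI1pos.le (by fun_prop) (fun z => Real.sqrt_nonneg _) hbI1
  have hI1low : m1 ≤ I1 a b t := by
    have hmm : ∀ z ∈ Set.Icc (-(a + s/2)) (-(a + s/4)),
        Real.sqrt ((a + b) / (T ^ 2 * b ^ 2 * s)) ≤
        Real.sqrt ((b - z) / ((t ^ 2 - z ^ 2) * (z ^ 2 - 1) * (-z - a))) := by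
      intro z hz
      obtain ⟨hzl, hzr⟩ := hz
      have hz1 : a + s/4 ≤ -z := by linarith
      have hz2 : -z ≤ a + s/2 := by linarith
      have hzb : -z < b := by linarith
      have hz5 : 0 < z ^ 2 - 1 := by linarith only [mul_pos (show (0:ℝ) < -1 - z by linarith) (show (0:ℝ) < 1 - z by linarith)]
      have hz6 : 0 < t ^ 2 - z ^ 2 := by
        linarith only [mul_pos (show (0:ℝ) < t - z by linarith) (show (0:ℝ) < t + z by linarith)]
      have hD : 0 < (t ^ 2 - z ^ 2) * (z ^ 2 - 1) * (-z - a) :=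
        mul_pos (mul_pos hz6 hz5) (by linarith)
      apply sqrt_lower (by linarith) (by linarith) hD
      apply prod3_le hz6.le hz5.le (by linarith)
      · linarith only [mul_nonneg (show (0:ℝ) ≤ T - t by linarith) (show (0:ℝ) ≤ T + t by linarith), sq_nonneg z]
      · linarith only [mul_nonneg (show (0:ℝ) ≤ b + z by linarith) (show (0:ℝ) ≤ b - z by linarith)]
      · linarith
    have h := lemD (l := -t) (r := -a)
      (fun z : ℝ => Real.sqrt ((b - z) / ((t ^ 2 - z ^ 2) * (z ^ 2 - 1) * (-z - a))))
      (by rw [hs]; linarith) (by linarith) (by linarith)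
      hI1C.1 (fun z => Real.sqrt_nonneg _) hmm
    have he : -(a + s/4) - -(a + s/2) = s / 4 := by ring
    rw [he] at h
    unfold I1
    rw [hm1]
    exact h
  -- ============ I5 ≥ 0 ============
  have hI5nn : 0 ≤ I5 a b t := by
    unfold I5
    exact intervalIntegral.integral_nonneg (by linarith) (fun z _ => Real.sqrt_nonneg _)
  -- ============ I2 : integrability, upper and lower bound ============
  have hbI2 : ∀ z : ℝ, -a < z → z < -1 →
      Real.sqrt ((b - z) / ((t ^ 2 - z ^ 2) * (z ^ 2 - 1) * (z + a))) ≤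
      Real.sqrt (C2 / ((z - -a) * (-1 - z))) := by
    intro z h1 h2
    have hz1 : 0 < z + a := by linarith
    have hz2 : 0 < -1 - z := by linarith
    have hz5 : 0 < z ^ 2 - 1 := by linarith only [mul_pos (show (0:ℝ) < -1 - z by linarith) (show (0:ℝ) < 1 - z by linarith)]
    have hz6 : 0 < t ^ 2 - z ^ 2 := by
      linarith only [mul_pos (show (0:ℝ) < t - z by linarith) (show (0:ℝ) < t + z by linarith)]
    have hD : 0 < (t ^ 2 - z ^ 2) * (z ^ 2 - 1) * (z + a) :=
      mul_pos (mul_pos hz6 hz5) hz1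
    rw [hC2]
    apply sqrt_bound hD (mul_pos (by linarith) hz2)
      (mul_pos (mul_pos (by linarith) (by linarith)) two_pos)
    calc (b - z) * ((z - -a) * (-1 - z)) * ((b + 1) * (b - a) * 2)
        = ((b - z) * (b + 1) * (b - a) * 2) * ((z + a) * (-1 - z)) := by ring
      _ ≤ ((b + a) * (t - z) * (t + z) * (1 - z)) * ((z + a) * (-1 - z)) := by
          apply mul_le_mul_of_nonneg_right _ (mul_nonneg hz1.le hz2.le)
          exact prod4_le (by linarith) (by linarith) (by linarith) (by linarith)
            (by linarith) (by linarith) (by linarith) (by linarith)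
      _ = (b + a) * ((t ^ 2 - z ^ 2) * (z ^ 2 - 1) * (z + a)) := by ring
  have hI2C := lemC (fun z : ℝ => Real.sqrt ((b - z) / ((t ^ 2 - z ^ 2) * (z ^ 2 - 1) * (z + a))))
    (show -a < -1 by linarith) hC2pos.le (by fun_prop) (fun z => Real.sqrt_nonneg _) hbI2
  have hI2up : I2 a b t ≤ 4 * Real.sqrt C2 := by unfold I2; exact hI2C.2
  have hI2low : m2 ≤ I2 a b t := by
    have hmm : ∀ z ∈ Set.Icc (-(a + 1)/2 - (a - 1)/8) (-(a + 1)/2 + (a - 1)/8),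
        Real.sqrt ((b + 1) / (T ^ 2 * (a ^ 2 - 1) * a)) ≤
        Real.sqrt ((b - z) / ((t ^ 2 - z ^ 2) * (z ^ 2 - 1) * (z + a))) := by
      intro z hz
      obtain ⟨hzl, hzr⟩ := hz
      have hz1 : (3*a + 5)/8 ≤ -z := by linarith
      have hz2 : -z ≤ (5*a + 3)/8 := by linarith
      have hza : -z ≤ a := by linarith
      have hzg1 : 1 < -z := by linarith
      have hz5 : 0 < z ^ 2 - 1 := by linarith only [mul_pos (show (0:ℝ) < -1 - z by linarith) (show (0:ℝ) < 1 - z by linarith)]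
      have hz6 : 0 < t ^ 2 - z ^ 2 := by
        linarith only [mul_pos (show (0:ℝ) < t - z by linarith) (show (0:ℝ) < t + z by linarith)]
      have hD : 0 < (t ^ 2 - z ^ 2) * (z ^ 2 - 1) * (z + a) :=
        mul_pos (mul_pos hz6 hz5) (by linarith)
      apply sqrt_lower (by linarith) (by linarith) hD
      apply prod3_le hz6.le hz5.le (by linarith)
      · linarith only [mul_nonneg (show (0:ℝ) ≤ T - t by linarith) (show (0:ℝ) ≤ T + t by linarith), sq_nonneg z]
      · linarith only [mul_nonneg (show (0:ℝ) ≤ a + z by linarith) (show (0:ℝ) ≤ a - z by linarith)]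
      · linarith
    have h := lemD (l := -a) (r := -1)
      (fun z : ℝ => Real.sqrt ((b - z) / ((t ^ 2 - z ^ 2) * (z ^ 2 - 1) * (z + a))))
      (by linarith) (by linarith) (by linarith)
      hI2C.1 (fun z => Real.sqrt_nonneg _) hmm
    have he : (-(a + 1)/2 + (a - 1)/8) - (-(a + 1)/2 - (a - 1)/8) = (a - 1)/4 := by ring
    rw [he] at h
    unfold I2
    rw [hm2]
    exact h
  -- ============ I4 : integrability and upper bound, nonneg ============
  have hbI4 : ∀ z : ℝ, (1:ℝ) < z → z < b →
      Real.sqrt ((b - z) / ((t ^ 2 - z ^ 2) * (z ^ 2 - 1) * (z + a))) ≤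
      Real.sqrt (C4 / ((z - 1) * (b - z))) := by
    intro z h1 h2
    have hz5 : 0 < z ^ 2 - 1 := by linarith only [mul_pos (show (0:ℝ) < z - 1 by linarith) (show (0:ℝ) < z + 1 by linarith)]
    have hz6 : 0 < t ^ 2 - z ^ 2 := by
      linarith only [mul_pos (show (0:ℝ) < t - z by linarith) (show (0:ℝ) < t + z by linarith)]
    have hD : 0 < (t ^ 2 - z ^ 2) * (z ^ 2 - 1) * (z + a) :=
      mul_pos (mul_pos hz6 hz5) (by linarith)
    rw [hC4]
    apply sqrt_bound hD (mul_pos (by linarith) (by linarith))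
      (mul_pos (mul_pos (by linarith) two_pos) (by linarith))
    calc (b - z) * ((z - 1) * (b - z)) * ((b + 1) * 2 * (1 + a))
        = ((b - z) * (b - z) * (b + 1) * 2 * (1 + a)) * (z - 1) := by ring
      _ ≤ ((b - 1) * (t - z) * (t + z) * (z + 1) * (z + a)) * (z - 1) := by
          apply mul_le_mul_of_nonneg_right _ (by linarith)
          exact prod5_le (by linarith) (by linarith) (by linarith) (by linarith) (by linarith)
            (by linarith) (by linarith) (by linarith) (by linarith) (by linarith)
      _ = (b - 1) * ((t ^ 2 - z ^ 2) * (z ^ 2 - 1) * (z + a)) := by ring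
  have hI4C := lemC (fun z : ℝ => Real.sqrt ((b - z) / ((t ^ 2 - z ^ 2) * (z ^ 2 - 1) * (z + a))))
    (show (1:ℝ) < b by linarith) hC4pos.le (by fun_prop) (fun z => Real.sqrt_nonneg _) hbI4
  have hI4up : I4 a b t ≤ 4 * Real.sqrt C4 := by unfold I4; exact hI4C.2
  have hI4nn : 0 ≤ I4 a b t := by
    unfold I4
    exact intervalIntegral.integral_nonneg (by linarith) (fun z _ => Real.sqrt_nonneg _)
  -- ============ J1 : upper bound, nonneg ============
  have hbJ1 : ∀ z : ℝ, -t < z → z < -a →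
      Real.sqrt ((-z - a) / ((t ^ 2 - z ^ 2) * (z ^ 2 - 1) * (b - z))) ≤
      Real.sqrt (CJ1 / ((z - -t) * (-a - z))) := by
    intro z h1 h2
    have hz1 : 0 < z + t := by linarith
    have hz2 : 0 < -a - z := by linarith
    have hz5 : 0 < z ^ 2 - 1 := by linarith only [mul_pos (show (0:ℝ) < -1 - z by linarith) (show (0:ℝ) < 1 - z by linarith)]
    have hz6 : 0 < t ^ 2 - z ^ 2 := by
      linarith only [mul_pos (show (0:ℝ) < t - z by linarith) hz1]
    have hD : 0 < (t ^ 2 - z ^ 2) * (z ^ 2 - 1) * (b - z) :=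
      mul_pos (mul_pos hz6 hz5) (by linarith)
    rw [hCJ1]
    apply sqrt_bound hD (mul_pos (by linarith) hz2)
      (mul_pos (mul_pos (by linarith) ha2) (by linarith))
    calc (-z - a) * ((z - -t) * (-a - z)) * ((a + b) * (a ^ 2 - 1) * (a + b))
        = ((-z - a) * (-a - z) * (a + b) * (a ^ 2 - 1) * (a + b)) * (z + t) := by ring
      _ ≤ ((T - a) * (T - a) * (t - z) * (z ^ 2 - 1) * (b - z)) * (z + t) := by
          apply mul_le_mul_of_nonneg_right _ (by linarith)
          exact prod5_le (by linarith) (by linarith) (by linarith) ha2.le (by linarith)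
            (by linarith) (by linarith) (by linarith) (by linarith only [mul_nonneg (show (0:ℝ) ≤ -a - z by linarith) (show (0:ℝ) ≤ a - z by linarith)]) (by linarith)
      _ = ((T - a) * (T - a)) * ((t ^ 2 - z ^ 2) * (z ^ 2 - 1) * (b - z)) := by ring
  have hJ1C := lemC (fun z : ℝ => Real.sqrt ((-z - a) / ((t ^ 2 - z ^ 2) * (z ^ 2 - 1) * (b - z))))
    (show -t < -a by linarith) hCJ1pos.le (by fun_prop) (fun z => Real.sqrt_nonneg _) hbJ1
  have hJ1up : J1 a b t ≤ 4 * Real.sqrt CJ1 := by unfold J1; exact hJ1C.2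
  have hJ1nn : 0 ≤ J1 a b t := by
    unfold J1
    exact intervalIntegral.integral_nonneg (by linarith) (fun z _ => Real.sqrt_nonneg _)
  -- ============ J5 : upper bound, nonneg ============
  have hbJ5 : ∀ z : ℝ, b < z → z < t →
      Real.sqrt ((z + a) / ((t ^ 2 - z ^ 2) * (z ^ 2 - 1) * (z - b))) ≤
      Real.sqrt (CJ5 / ((z - b) * (t - z))) := by
    intro z h1 h2
    have hz5 : 0 < z ^ 2 - 1 := by linarith only [mul_pos (show (0:ℝ) < z - 1 by linarith) (show (0:ℝ) < z + 1 by linarith)]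
    have hz6 : 0 < t ^ 2 - z ^ 2 := by
      linarith only [mul_pos (show (0:ℝ) < t - z by linarith) (show (0:ℝ) < t + z by linarith)]
    have hD : 0 < (t ^ 2 - z ^ 2) * (z ^ 2 - 1) * (z - b) :=
      mul_pos (mul_pos hz6 hz5) (by linarith)
    rw [hCJ5]
    apply sqrt_bound hD (mul_pos (by linarith) (by linarith))
      (mul_pos (by linarith) hb2)
    calc (z + a) * ((z - b) * (t - z)) * ((2 * b) * (b ^ 2 - 1))
        = ((z + a) * (2 * b) * (b ^ 2 - 1)) * ((z - b) * (t - z)) := by ring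
      _ ≤ ((T + a) * (t + z) * (z ^ 2 - 1)) * ((z - b) * (t - z)) := by
          apply mul_le_mul_of_nonneg_right _ (mul_nonneg (by linarith) (by linarith))
          exact prod3_le (by linarith) (by linarith) hb2.le
            (by linarith) (by linarith) (by linarith only [mul_nonneg (show (0:ℝ) ≤ z - b by linarith) (show (0:ℝ) ≤ z + b by linarith)])
      _ = (T + a) * ((t ^ 2 - z ^ 2) * (z ^ 2 - 1) * (z - b)) := by ring
  have hJ5C := lemC (fun z : ℝ => Real.sqrt ((z + a) / ((t ^ 2 - z ^ 2) * (z ^ 2 - 1) * (z - b))))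
    ht1 hCJ5pos.le (by fun_prop) (fun z => Real.sqrt_nonneg _) hbJ5
  have hJ5up : J5 a b t ≤ 4 * Real.sqrt CJ5 := by unfold J5; exact hJ5C.2
  have hJ5nn : 0 ≤ J5 a b t := by
    unfold J5
    exact intervalIntegral.integral_nonneg (by linarith) (fun z _ => Real.sqrt_nonneg _)
  -- ============ J2 ≥ 0 ============
  have hJ2nn : 0 ≤ J2 a b t := by
    unfold J2
    exact intervalIntegral.integral_nonneg (by linarith) (fun z _ => Real.sqrt_nonneg _)
  -- ============ J4 : lower bound via logarithmic divergence ============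
  have hbJ4 : ∀ z : ℝ, (1:ℝ) < z → z < b →
      Real.sqrt ((z + a) / ((t ^ 2 - z ^ 2) * (z ^ 2 - 1) * (b - z))) ≤
      Real.sqrt (((b + a) / ((t - b) * (t + 1) * 2)) / ((z - 1) * (b - z))) := by
    intro z h1 h2
    have hz5 : 0 < z ^ 2 - 1 := by linarith only [mul_pos (show (0:ℝ) < z - 1 by linarith) (show (0:ℝ) < z + 1 by linarith)]
    have hz6 : 0 < t ^ 2 - z ^ 2 := by
      linarith only [mul_pos (show (0:ℝ) < t - z by linarith) (show (0:ℝ) < t + z by linarith)]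
    have hD : 0 < (t ^ 2 - z ^ 2) * (z ^ 2 - 1) * (b - z) :=
      mul_pos (mul_pos hz6 hz5) (by linarith)
    apply sqrt_bound hD (mul_pos (by linarith) (by linarith))
      (mul_pos (mul_pos (by linarith) (by linarith)) two_pos)
    calc (z + a) * ((z - 1) * (b - z)) * ((t - b) * (t + 1) * 2)
        = ((z + a) * (t - b) * (t + 1) * 2) * ((z - 1) * (b - z)) := by ring
      _ ≤ ((b + a) * (t - z) * (t + z) * (z + 1)) * ((z - 1) * (b - z)) := by
          apply mul_le_mul_of_nonneg_right _ (mul_nonneg (by linarith) (by linarith))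
          exact prod4_le (by linarith) (by linarith) (by linarith) (by linarith)
            (by linarith) (by linarith) (by linarith) (by linarith)
      _ = (b + a) * ((t ^ 2 - z ^ 2) * (z ^ 2 - 1) * (b - z)) := by ring
  have hJ4C := lemC (fun z : ℝ => Real.sqrt ((z + a) / ((t ^ 2 - z ^ 2) * (z ^ 2 - 1) * (b - z))))
    (show (1:ℝ) < b by linarith)
    (le_of_lt (div_pos (by linarith)
      (mul_pos (mul_pos (by linarith) (by linarith)) two_pos)))
    (by fun_prop) (fun z => Real.sqrt_nonneg _) hbJ4
  have hJ4low : Real.sqrt clow * (Real.log (t - c) - Real.log (t - b)) ≤ J4 a b t := by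
    have hsub : ∀ x y : ℝ, (1:ℝ) ≤ x → x ≤ y → y ≤ b → Set.uIcc x y ⊆ Set.uIcc (1:ℝ) b := by
      intro x y hx hxy hyb
      rw [Set.uIcc_of_le hxy, Set.uIcc_of_le (by linarith : (1:ℝ) ≤ b)]
      exact Set.Icc_subset_Icc hx hyb
    have h1c : IntervalIntegrable
        (fun z : ℝ => Real.sqrt ((z + a) / ((t ^ 2 - z ^ 2) * (z ^ 2 - 1) * (b - z))))
        volume 1 c := hJ4C.1.mono_set (hsub 1 c le_rfl hc1.le hcb.le)
    have hcbint : IntervalIntegrable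
        (fun z : ℝ => Real.sqrt ((z + a) / ((t ^ 2 - z ^ 2) * (z ^ 2 - 1) * (b - z))))
        volume c b := hJ4C.1.mono_set (hsub c b hc1.le hcb.le le_rfl)
    have hhint : IntervalIntegrable (fun z : ℝ => Real.sqrt clow * (t - z)⁻¹) volume c b := by
      apply ContinuousOn.intervalIntegrable
      apply ContinuousOn.mul continuousOn_const
      apply ContinuousOn.inv₀ ((continuous_const.sub continuous_id).continuousOn)
      intro z hz
      rw [Set.uIcc_of_le hcb.le] at hz
      have h1 : z ≤ b := hz.2
      exact (show (0:ℝ) < t - z by linarith).ne'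
    have hmono : (∫ z in c..b, Real.sqrt clow * (t - z)⁻¹) ≤
        ∫ z in c..b, Real.sqrt ((z + a) / ((t ^ 2 - z ^ 2) * (z ^ 2 - 1) * (b - z))) := by
      apply intervalIntegral.integral_mono_ae_restrict hcb.le hhint hcbint
      filter_upwards [MeasureTheory.ae_restrict_mem measurableSet_Icc,
        MeasureTheory.ae_restrict_of_ae (ae_ne' b)] with z hz hne
      have hzc : c ≤ z := hz.1
      have hzb : z < b := lt_of_le_of_ne hz.2 hne
      have hz1 : 1 < z := by linarith
      have hz5 : 0 < z ^ 2 - 1 := by linarith only [mul_pos (show (0:ℝ) < z - 1 by linarith) (show (0:ℝ) < z + 1 by linarith)]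
      have hz6 : 0 < t ^ 2 - z ^ 2 := by
        linarith only [mul_pos (show (0:ℝ) < t - z by linarith) (show (0:ℝ) < t + z by linarith)]
      have hD : 0 < (t ^ 2 - z ^ 2) * (z ^ 2 - 1) * (b - z) :=
        mul_pos (mul_pos hz6 hz5) (by linarith)
      apply sqrt_inv_bound hclowpos.le (by linarith : (0:ℝ) < t - z) hD
      rw [hclow, div_mul_eq_mul_div,
        div_le_iff₀ (mul_pos (by linarith) hb2 : (0:ℝ) < (T + b) * (b ^ 2 - 1))]
      calc (1 + a) * ((t ^ 2 - z ^ 2) * (z ^ 2 - 1) * (b - z))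
          = ((1 + a) * (t + z) * (z ^ 2 - 1) * (b - z)) * (t - z) := by ring
        _ ≤ ((z + a) * (T + b) * (b ^ 2 - 1) * (t - z)) * (t - z) := by
            apply mul_le_mul_of_nonneg_right _ (by linarith)
            exact prod4_le (by linarith) (by linarith) hz5.le (by linarith)
              (by linarith) (by linarith) (by linarith only [mul_nonneg (show (0:ℝ) ≤ b - z by linarith) (show (0:ℝ) ≤ b + z by linarith)]) (by linarith)
        _ = (z + a) * (t - z) ^ 2 * ((T + b) * (b ^ 2 - 1)) := by ring
    have hhval : (∫ z in c..b, Real.sqrt clow * (t - z)⁻¹) =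
        Real.sqrt clow * (Real.log (t - c) - Real.log (t - b)) := by
      rw [intervalIntegral.integral_const_mul]
      have h6 := intervalIntegral.integral_comp_sub_left (a := c) (b := b) (fun u : ℝ => u⁻¹) t
      rw [h6]
      have h7 : (0:ℝ) ∉ Set.uIcc (t - b) (t - c) := by
        rw [Set.uIcc_of_le (by linarith : t - b ≤ t - c)]
        simp only [Set.mem_Icc]
        push_neg
        intro h
        linarith
      rw [integral_inv h7, Real.log_div (show t - c ≠ 0 from (by linarith : (0:ℝ) < t - c).ne')
        (show t - b ≠ 0 from (by linarith : (0:ℝ) < t - b).ne')]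
    have hJ4split : J4 a b t =
        (∫ z in (1:ℝ)..c, Real.sqrt ((z + a) / ((t ^ 2 - z ^ 2) * (z ^ 2 - 1) * (b - z)))) +
        ∫ z in c..b, Real.sqrt ((z + a) / ((t ^ 2 - z ^ 2) * (z ^ 2 - 1) * (b - z))) := by
      unfold J4
      rw [intervalIntegral.integral_add_adjacent_intervals h1c hcbint]
    have hfirst : 0 ≤ ∫ z in (1:ℝ)..c,
        Real.sqrt ((z + a) / ((t ^ 2 - z ^ 2) * (z ^ 2 - 1) * (b - z))) :=
      intervalIntegral.integral_nonneg hc1.le (fun z _ => Real.sqrt_nonneg _)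
    rw [hJ4split]
    calc Real.sqrt clow * (Real.log (t - c) - Real.log (t - b))
        = ∫ z in c..b, Real.sqrt clow * (t - z)⁻¹ := hhval.symm
      _ ≤ ∫ z in c..b, Real.sqrt ((z + a) / ((t ^ 2 - z ^ 2) * (z ^ 2 - 1) * (b - z))) := hmono
      _ ≤ _ := by linarith
  have hWL : L < Real.sqrt clow * (Real.log (t - c) - Real.log (t - b)) := by
    have h9 : Real.log (t - b) < Real.log (b - c) + (-(L / Real.sqrt clow)) := by
      calc Real.log (t - b) < Real.log ((b - c) * Real.exp (-(L / Real.sqrt clow))) :=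
            Real.log_lt_log (by linarith) (by linarith)
        _ = Real.log (b - c) + (-(L / Real.sqrt clow)) := by
            rw [Real.log_mul (by linarith : b - c ≠ 0) (Real.exp_ne_zero _), Real.log_exp]
    have h10 : Real.log (b - c) ≤ Real.log (t - c) :=
      Real.log_le_log (by linarith) (by linarith)
    have h11 : L / Real.sqrt clow < Real.log (t - c) - Real.log (t - b) := by linarith
    have h12 : Real.sqrt clow * (L / Real.sqrt clow) = L := by field_simp
    linarith only [mul_lt_mul_of_pos_left h11 hsclow, h12]
  -- ============ final assembly ============
  set A : ℝ := I1 a b t + I5 a b t with hA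
  set B : ℝ := I2 a b t + I4 a b t with hB
  set Cq : ℝ := J1 a b t + J5 a b t with hCq
  set D : ℝ := J2 a b t + J4 a b t with hD
  have hAm1 : m1 ≤ A := by rw [hA]; linarith
  have hBpos : 0 < B := by rw [hB]; linarith
  have hBMB : B ≤ MB := by rw [hB, hMB]; linarith
  have hCqM2 : Cq ≤ M2 := by rw [hCq, hM2]; linarith
  have hCqnn : 0 ≤ Cq := by rw [hCq]; linarith
  have hDL : L < D := by
    rw [hD]
    have := hJ4low
    linarith
  have hDpos : 0 < D := hLpos.trans hDL
  have hq1 : m1 / MB ≤ A / B := by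
    have h1 : m1 / MB ≤ A / MB := by
      exact div_le_div_of_nonneg_right hAm1 hMBpos.le
    have h2 : A / MB ≤ A / B :=
      div_le_div_of_nonneg_left (by linarith) hBpos hBMB
    linarith
  have hq2 : Cq / D < m1 / (2 * MB) := by
    have h1 : Cq / D ≤ M2 / D := div_le_div_of_nonneg_right hCqM2 hDpos.le
    have h2 : M2 / D < M2 / L := div_lt_div_of_pos_left hM2pos hLpos hDL
    have h3 : M2 / L = m1 / (2 * MB) := by
      have hm1ne := hm1pos.ne'
      have hMBne := hMBpos.ne'
      have hM2ne := hM2pos.ne'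
      rw [hL]
      field_simp
    linarith
  have heq : m1 / MB - m1 / (2 * MB) = m1 / (2 * MB) := by
    have hMBne := hMBpos.ne'
    field_simp
    ring
  have hfin : A / B - Cq / D > ε := by
    rw [hε]
    linarith
  unfold Q
  rw [← hA, ← hB, ← hCq, ← hD]
  exact hfin
end

section
/- Fix real numbers a, b with 1 < a ≤ b. Then the period integral J₄(a,b;t) = ∫_{1}^{b} √((z+a)/((t²−z²)(z²−1)(b−z))) dz tends to +∞ as t tends to b from the right. -/
open MeasureTheory intervalIntegral Real Filter Topology

/-!
For `z ≤ 2b - t` one has `t - z ≤ 2(b - z)` and `t + z ≤ 2b`, so the integrand of `J₄` is at least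
`c / (b - z)` on `(1, 2b - t]` with `c > 0` independent of `t`; integrating gives
`J₄(a,b;t) ≥ c · log ((b - 1) / (t - b)) → +∞`. For this lower bound to say anything the integral
must converge: its singularities at `z = 1` and `z = b` are of order `(z - 1)^{-1/2}` and
`(b - z)^{-1/2}` while `t > b`.
-/

open Set

lemma intervalIntegrable_inv_sqrt {c : ℝ} (hc : 0 ≤ c) :
    IntervalIntegrable (fun x : ℝ => (√x)⁻¹) volume 0 c := by
  refine (intervalIntegrable_rpow' (r := -(1 / 2)) (by norm_num)).congr fun x hx => ?_
  rw [uIoc_of_le hc] at hx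
  rw [rpow_neg hx.1.le, ← sqrt_eq_rpow]

lemma tendsto_const_div_sub_nhdsGT {b c : ℝ} (hc : 0 < c) :
    Tendsto (fun t : ℝ => c / (t - b)) (𝓝[>] b) atTop := by
  have hsub : Tendsto (fun t : ℝ => t - b) (𝓝[>] b) (𝓝[>] 0) :=
    tendsto_nhdsWithin_of_tendsto_nhds_of_eventually_within _
      (((continuous_sub_right b).tendsto' b 0 (sub_self b)).mono_left nhdsWithin_le_nhds)
      (eventually_nhdsWithin_of_forall fun _ ht => mem_Ioi.2 (sub_pos.2 ht))
  simp only [div_eq_mul_inv]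
  exact hsub.inv_tendsto_nhdsGT_zero.const_mul_atTop hc

noncomputable def j4Integrand (a b t z : ℝ) : ℝ :=
  √((z + a) / ((t ^ 2 - z ^ 2) * (z ^ 2 - 1) * (b - z)))

section J4Bounds

variable {a b t : ℝ}

lemma j4Integrand_nonneg (z : ℝ) : 0 ≤ j4Integrand a b t z := sqrt_nonneg _

lemma j4Integrand_le {z : ℝ} (ha : -1 < a) (hz : z ∈ Ioo 1 b) (ht : b < t) :
    j4Integrand a b t z ≤
      √((b + a) / (2 * (t ^ 2 - b ^ 2) * (b - 1))) * ((√(z - 1))⁻¹ + (√(b - z))⁻¹) := by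
  obtain ⟨hz1, hzb⟩ := hz
  have hu : 0 < z - 1 := sub_pos.2 hz1
  have hv : 0 < b - z := sub_pos.2 hzb
  have hp : ((√(z - 1))⁻¹) ^ 2 = (z - 1)⁻¹ := by rw [inv_pow, sq_sqrt hu.le]
  have hq : ((√(b - z))⁻¹) ^ 2 = (b - z)⁻¹ := by rw [inv_pow, sq_sqrt hv.le]
  have hb1 : 0 < b - 1 := by linarith
  have hba : 0 < b + a := by linarith
  have htb : 0 < t ^ 2 - b ^ 2 := by nlinarith
  rw [j4Integrand, sqrt_le_left (by positivity), mul_pow, sq_sqrt (by positivity)]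
  calc (z + a) / ((t ^ 2 - z ^ 2) * (z ^ 2 - 1) * (b - z))
      ≤ (b + a) / (2 * (t ^ 2 - b ^ 2) * (z - 1) * (b - z)) := by
        gcongr ?_ / ?_
        · linarith
        · have hzt : t ^ 2 - b ^ 2 ≤ t ^ 2 - z ^ 2 := by nlinarith
          have hz2 : 2 * (z - 1) ≤ z ^ 2 - 1 := by nlinarith
          nlinarith [mul_le_mul hzt hz2 (by positivity) (by nlinarith)]
    _ = (b + a) / (2 * (t ^ 2 - b ^ 2) * (b - 1)) * ((z - 1)⁻¹ + (b - z)⁻¹) := by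
        -- `(z - 1) + (b - z) = b - 1`
        field_simp
        ring
    _ ≤ (b + a) / (2 * (t ^ 2 - b ^ 2) * (b - 1)) * ((√(z - 1))⁻¹ + (√(b - z))⁻¹) ^ 2 := by
        gcongr
        rw [add_sq, hp, hq]
        nlinarith [mul_nonneg (inv_nonneg.2 (sqrt_nonneg (z - 1)))
          (inv_nonneg.2 (sqrt_nonneg (b - z)))]

lemma div_sub_le_j4Integrand {z : ℝ} (ha : -1 < a) (hz : z ∈ Ioc 1 (2 * b - t)) (ht : b < t) :
    √((1 + a) / (4 * b * (b ^ 2 - 1))) / (b - z) ≤ j4Integrand a b t z := by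
  obtain ⟨hz1, hzt⟩ := hz
  have hv : 0 < b - z := by linarith
  have hb : 0 < b ^ 2 - 1 := by nlinarith
  have hE : 0 < 4 * b * (b ^ 2 - 1) := mul_pos (by linarith) hb
  have hD : 0 < (t ^ 2 - z ^ 2) * (z ^ 2 - 1) * (b - z) := by
    have : 0 < t ^ 2 - z ^ 2 := by nlinarith
    have : 0 < z ^ 2 - 1 := by nlinarith
    positivity
  rw [j4Integrand, le_sqrt (div_nonneg (sqrt_nonneg _) hv.le) (div_nonneg (by linarith) hD.le),
    div_pow, sq_sqrt (div_nonneg (by linarith) hE.le), div_div]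
  gcongr ?_ / ?_
  · linarith
  · linarith
  · -- `t ^ 2 - z ^ 2 = (t - z) * (t + z)` with `t - z ≤ 2 * (b - z)` and `t + z ≤ 2 * b`
    have hdiff : t ^ 2 - z ^ 2 ≤ 4 * b * (b - z) := by nlinarith
    have hsq : z ^ 2 - 1 ≤ b ^ 2 - 1 := by nlinarith
    calc (t ^ 2 - z ^ 2) * (z ^ 2 - 1) * (b - z)
        ≤ (4 * b * (b - z)) * (b ^ 2 - 1) * (b - z) := by
          gcongr <;> nlinarith
      _ = 4 * b * (b ^ 2 - 1) * (b - z) ^ 2 := by ring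

lemma intervalIntegrable_j4Integrand (ha : -1 < a) (hb : 1 < b) (ht : b < t) :
    IntervalIntegrable (j4Integrand a b t) volume 1 b := by
  have hleft : IntervalIntegrable (fun z => (√(z - 1))⁻¹) volume 1 b := by
    simpa using (intervalIntegrable_inv_sqrt (sub_nonneg.2 hb.le)).comp_sub_right 1
  have hright : IntervalIntegrable (fun z => (√(b - z))⁻¹) volume 1 b := by
    simpa using ((intervalIntegrable_inv_sqrt (sub_nonneg.2 hb.le)).comp_sub_left b).symm
  refine ((hleft.add hright).const_mul
    √((b + a) / (2 * (t ^ 2 - b ^ 2) * (b - 1)))).mono_fun' ?_ ?_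
  · exact (by unfold j4Integrand; fun_prop : Measurable (j4Integrand a b t)).aestronglyMeasurable
  · rw [uIoc_of_le hb.le]
    filter_upwards [ae_restrict_mem measurableSet_Ioc] with z ⟨hz1, hzb⟩
    rw [norm_of_nonneg (j4Integrand_nonneg z)]
    rcases hzb.lt_or_eq with hzb | rfl
    · exact j4Integrand_le ha ⟨hz1, hzb⟩ ht
    · simp only [j4Integrand, sub_self, mul_zero, div_zero, sqrt_zero]
      positivity

lemma mul_log_le_J4 (ha : -1 < a) (ht : b < t) (ht' : t < 2 * b - 1) :
    √((1 + a) / (4 * b * (b ^ 2 - 1))) * log ((b - 1) / (t - b)) ≤ J4 a b t := by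
  set c := √((1 + a) / (4 * b * (b ^ 2 - 1)))
  have hb : 1 < b := by linarith
  have hint := intervalIntegrable_j4Integrand ha hb ht
  have hsub : uIcc 1 (2 * b - t) ⊆ uIcc 1 b := by
    rw [uIcc_of_le (by linarith), uIcc_of_le hb.le]
    exact Icc_subset_Icc_right (by linarith)
  have hcont : IntervalIntegrable (fun z => c / (b - z)) volume 1 (2 * b - t) := by
    refine ContinuousOn.intervalIntegrable (continuousOn_const.div (by fun_prop) fun z hz => ?_)
    rw [uIcc_of_le (by linarith)] at hz
    linarith [hz.2]
  have hlog : ∫ z in (1 : ℝ)..(2 * b - t), c / (b - z) = c * log ((b - 1) / (t - b)) := by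
    simp only [div_eq_mul_inv c]
    rw [intervalIntegral.integral_const_mul, integral_comp_sub_left (fun x => x⁻¹) b,
      integral_inv_of_pos (by linarith) (by linarith), show b - (2 * b - t) = t - b by ring]
  calc c * log ((b - 1) / (t - b))
      = ∫ z in (1 : ℝ)..(2 * b - t), c / (b - z) := hlog.symm
    _ ≤ ∫ z in (1 : ℝ)..(2 * b - t), j4Integrand a b t z :=
        integral_mono_on_of_le_Ioo (by linarith) hcont
          (hint.mono_set hsub)
          fun z hz => div_sub_le_j4Integrand ha (Ioo_subset_Ioc_self hz) ht
    _ ≤ J4 a b t :=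
        integral_mono_interval le_rfl (by linarith) (by linarith)
          (Eventually.of_forall j4Integrand_nonneg) hint

end J4Bounds

/-- `J₄(a,b;t) → +∞` as `t → b⁺`. -/
theorem stmt4 (a b : ℝ) (ha : 1 < a) (hab : a ≤ b) :
    Tendsto (fun t : ℝ => J4 a b t) (𝓝[>] b) atTop := by
  have hb : 1 < b := ha.trans_le hab
  have hc : 0 < √((1 + a) / (4 * b * (b ^ 2 - 1))) :=
    sqrt_pos.2 (div_pos (by linarith) (mul_pos (by linarith) (by nlinarith)))
  refine tendsto_atTop_mono' _ ?_
    ((tendsto_log_atTop.comp (tendsto_const_div_sub_nhdsGT (sub_pos.2 hb))).const_mul_atTop hc)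
  filter_upwards [Ioo_mem_nhdsGT (show b < 2 * b - 1 by linarith)] with t ht
  exact mul_log_le_J4 (by linarith) ht.1 ht.2
end

section
/- Fix real numbers a, b with 1 < a ≤ b. Then, as t tends to b from the right, the period integral I₅(a,b;t) = ∫_{b}^{t} √((z−b)/((t²−z²)(z²−1)(z+a))) dz tends to 0, and the period integral J₅(a,b;t) = ∫_{b}^{t} √((z+a)/((t²−z²)(z²−1)(z−b))) dz tends to π·√((a+b)/(2b(b²−1))). -/
open MeasureTheory intervalIntegral Real Filter Topology

/-! The substitution `z = b + (t - b) u` maps `[b, t]` onto `[0, 1]`; as `z - b = (t - b) u` and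
`t² - z² = (t - b) (1 - u) (t + z)`, it turns both integrals into `∫₀¹ h(t, u) / √(u (1 - u)) du`
with `h` jointly continuous up to `t = b`: `h = (t - b) u / √((t + z)(z² - 1)(z + a))` for `I₅` and
`h = √((z + a) / ((t + z)(z² - 1)))` for `J₅`. The weight `1 / √(u (1 - u))`, the derivative of
`arcsin (2u - 1)`, is integrable with integral `π`, so dominated convergence lets `t → b` under
the integral, where `h(b, ·)` is `0`, respectively the constant `√((a + b) / (2b (b² - 1)))`. -/

open Set Function

lemma hasDerivAt_arcsin_two_mul_sub_one {u : ℝ} (hu : u ∈ Ioo (0 : ℝ) 1) :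
    HasDerivAt (fun v => arcsin (2 * v - 1)) (√(u * (1 - u)))⁻¹ u := by
  have h : HasDerivAt (fun v => arcsin (2 * v - 1)) (1 / √(1 - (2 * u - 1) ^ 2) * (2 * 1)) u :=
    (hasDerivAt_arcsin (by linarith [hu.1]) (by linarith [hu.2])).comp u
      (((hasDerivAt_id u).const_mul 2).sub_const 1)
  convert h using 1
  have hsq : √(1 - (2 * u - 1) ^ 2) = 2 * √(u * (1 - u)) := by
    rw [show 1 - (2 * u - 1) ^ 2 = 2 ^ 2 * (u * (1 - u)) by ring,
      sqrt_mul (by norm_num), sqrt_sq (by norm_num)]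
  have hpos : 0 < √(u * (1 - u)) := sqrt_pos.2 (mul_pos hu.1 (by linarith [hu.2]))
  rw [hsq]
  field_simp

lemma intervalIntegrable_inv_sqrt_mul_one_sub :
    IntervalIntegrable (fun u : ℝ => (√(u * (1 - u)))⁻¹) volume 0 1 := by
  refine intervalIntegrable_deriv_of_nonneg (g := fun v => arcsin (2 * v - 1)) (by fun_prop)
    (fun u hu => hasDerivAt_arcsin_two_mul_sub_one ?_) (fun u _ => by positivity)
  simpa using hu

lemma integral_inv_sqrt_mul_one_sub : ∫ u in (0 : ℝ)..1, (√(u * (1 - u)))⁻¹ = π := by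
  rw [integral_eq_sub_of_hasDerivAt_of_le zero_le_one (by fun_prop)
    (fun u hu => hasDerivAt_arcsin_two_mul_sub_one hu) intervalIntegrable_inv_sqrt_mul_one_sub]
  norm_num

theorem tendsto_intervalIntegral_mul_of_continuousOn {X : Type*} [TopologicalSpace X]
    [FirstCountableTopology X] {K : Set X} (hK : IsCompact K) {a b : ℝ} {h : X → ℝ → ℝ}
    (hh : ContinuousOn (uncurry h) (K ×ˢ uIcc a b)) {w : ℝ → ℝ}
    (hw : IntervalIntegrable w volume a b) {x₀ : X} (hx₀ : x₀ ∈ K) :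
    Tendsto (fun x => ∫ u in a..b, h x u * w u) (𝓝[K] x₀)
      (𝓝 (∫ u in a..b, h x₀ u * w u)) := by
  obtain ⟨C, hC⟩ := (hK.prod isCompact_uIcc).exists_bound_of_continuousOn hh
  have hslice : ∀ x ∈ K, ContinuousOn (h x) (uIcc a b) := fun x hx =>
    hh.comp (f := fun u => (x, u)) (by fun_prop) fun u hu => ⟨hx, hu⟩
  refine tendsto_integral_filter_of_dominated_convergence (fun u => C * ‖w u‖) ?_ ?_
    (hw.norm.const_mul C) ?_
  · filter_upwards [self_mem_nhdsWithin] with x hx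
    exact ((hslice x hx).mono uIoc_subset_uIcc).aestronglyMeasurable measurableSet_uIoc
      |>.mul hw.def'.aestronglyMeasurable
  · filter_upwards [self_mem_nhdsWithin] with x hx
    refine ae_of_all _ fun u hu => ?_
    rw [norm_mul]
    exact mul_le_mul_of_nonneg_right (hC (x, u) ⟨hx, uIoc_subset_uIcc hu⟩) (norm_nonneg _)
  · refine ae_of_all _ fun u hu => Tendsto.mul_const _ ?_
    exact (hh (x₀, u) ⟨hx₀, uIoc_subset_uIcc hu⟩).tendsto.comp
      (tendsto_nhdsWithin_of_tendsto_nhds_of_eventually_within _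
        ((continuous_id.prodMk continuous_const).tendsto' _ _ rfl |>.mono_left nhdsWithin_le_nhds)
        (eventually_nhdsWithin_of_forall fun x hx => ⟨hx, uIoc_subset_uIcc hu⟩))

lemma tendsto_integral_mul_inv_sqrt_nhdsGT {b : ℝ} {h : ℝ → ℝ → ℝ}
    (hh : ContinuousOn (uncurry h) (Ici b ×ˢ Ici 0)) :
    Tendsto (fun t => ∫ u in (0 : ℝ)..1, h t u * (√(u * (1 - u)))⁻¹) (𝓝[>] b)
      (𝓝 (∫ u in (0 : ℝ)..1, h b u * (√(u * (1 - u)))⁻¹)) := by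
  have hsub : Icc b (b + 1) ×ˢ uIcc (0 : ℝ) 1 ⊆ Ici b ×ˢ Ici 0 := by
    rw [uIcc_of_le zero_le_one]
    exact prod_mono Icc_subset_Ici_self Icc_subset_Ici_self
  exact (tendsto_intervalIntegral_mul_of_continuousOn isCompact_Icc (hh.mono hsub)
    intervalIntegrable_inv_sqrt_mul_one_sub (left_mem_Icc.2 (by linarith))).mono_left
    (nhdsWithin_le_of_mem (Icc_mem_nhdsGT (lt_add_one b)))

lemma integral_eq_integral_comp_unit (f : ℝ → ℝ) (b t : ℝ) :
    ∫ z in b..t, f z = ∫ u in (0 : ℝ)..1, (t - b) * f (b + (t - b) * u) := by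
  rw [intervalIntegral.integral_const_mul, ← smul_eq_mul, smul_integral_comp_add_mul]
  simp

section Substitution

variable {a b t u z : ℝ}

/- At `u = 0` and `u = 1` both sides of the next two identities vanish, through `x / 0 = 0`;
this is why they hold on all of `Icc 0 1`. -/
lemma sub_mul_sqrt_I5_integrand (hbt : b < t) (hu : u ∈ Icc (0 : ℝ) 1)
    (hz : z = b + (t - b) * u) :
    (t - b) * √((z - b) / ((t ^ 2 - z ^ 2) * (z ^ 2 - 1) * (z + a))) =
      (t - b) * u / √((t + z) * (z ^ 2 - 1) * (z + a)) * (√(u * (1 - u)))⁻¹ := by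
  have hs : t - b ≠ 0 := sub_ne_zero.2 hbt.ne'
  have hp : 0 ≤ u * (1 - u) := mul_nonneg hu.1 (by linarith [hu.2])
  have hratio : (z - b) / ((t ^ 2 - z ^ 2) * (z ^ 2 - 1) * (z + a)) =
      u ^ 2 / (u * (1 - u) * ((t + z) * (z ^ 2 - 1) * (z + a))) := by
    rw [show z - b = (t - b) * u by rw [hz]; ring,
      show (t ^ 2 - z ^ 2) * (z ^ 2 - 1) * (z + a) =
        (t - b) * ((1 - u) * ((t + z) * (z ^ 2 - 1) * (z + a))) by rw [hz]; ring,
      mul_div_mul_left _ _ hs]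
    rcases eq_or_ne u 0 with rfl | hu0
    · simp
    · rw [← mul_div_mul_left u _ hu0, ← sq, ← mul_assoc]
  rw [hratio, sqrt_div (sq_nonneg u), sqrt_sq hu.1, sqrt_mul hp]
  ring

lemma sub_mul_sqrt_J5_integrand (hbt : b < t) (hu : u ∈ Icc (0 : ℝ) 1)
    (hz : z = b + (t - b) * u) :
    (t - b) * √((z + a) / ((t ^ 2 - z ^ 2) * (z ^ 2 - 1) * (z - b))) =
      √((z + a) / ((t + z) * (z ^ 2 - 1))) * (√(u * (1 - u)))⁻¹ := by
  have hp : 0 ≤ u * (1 - u) := mul_nonneg hu.1 (by linarith [hu.2])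
  have hratio : (z + a) / ((t ^ 2 - z ^ 2) * (z ^ 2 - 1) * (z - b)) =
      (z + a) / ((t + z) * (z ^ 2 - 1)) / ((t - b) ^ 2 * (u * (1 - u))) := by
    rw [div_div]
    congr 1
    subst hz
    ring
  rw [hratio, sqrt_div' _ (mul_nonneg (sq_nonneg _) hp), sqrt_mul (sq_nonneg _),
    sqrt_sq (sub_pos.2 hbt).le]
  field_simp [sub_ne_zero.2 hbt.ne']

end Substitution

lemma I5_eq_integral {a b t : ℝ} (hbt : b < t) :
    I5 a b t = ∫ u in (0 : ℝ)..1, (t - b) * u /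
      √((t + (b + (t - b) * u)) * ((b + (t - b) * u) ^ 2 - 1) * (b + (t - b) * u + a)) *
        (√(u * (1 - u)))⁻¹ := by
  rw [I5, integral_eq_integral_comp_unit]
  refine integral_congr fun u hu => sub_mul_sqrt_I5_integrand hbt ?_ rfl
  rwa [uIcc_of_le zero_le_one] at hu

lemma J5_eq_integral {a b t : ℝ} (hbt : b < t) :
    J5 a b t = ∫ u in (0 : ℝ)..1,
      √((b + (t - b) * u + a) / ((t + (b + (t - b) * u)) * ((b + (t - b) * u) ^ 2 - 1))) *
        (√(u * (1 - u)))⁻¹ := by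
  rw [J5, integral_eq_integral_comp_unit]
  refine integral_congr fun u hu => sub_mul_sqrt_J5_integrand hbt ?_ rfl
  rwa [uIcc_of_le zero_le_one] at hu

section Kernels

variable {a b : ℝ}

lemma one_lt_add_sub_mul (hb : 1 < b) {p : ℝ × ℝ} (hp : p ∈ Ici b ×ˢ Ici 0) :
    1 < b + (p.1 - b) * p.2 :=
  lt_add_of_lt_of_nonneg hb (mul_nonneg (sub_nonneg.2 hp.1) hp.2)

lemma continuousOn_I5_kernel (hb : 1 < b) (ha : -1 ≤ a) :
    ContinuousOn (uncurry fun t u => (t - b) * u /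
        √((t + (b + (t - b) * u)) * ((b + (t - b) * u) ^ 2 - 1) * (b + (t - b) * u + a)))
      (Ici b ×ˢ Ici 0) := by
  refine ContinuousOn.div (by fun_prop) (by fun_prop) fun p hp => ?_
  have hz := one_lt_add_sub_mul hb hp
  have ht : b ≤ p.1 := hp.1
  have : 0 < (b + (p.1 - b) * p.2) ^ 2 - 1 := by nlinarith
  have : 0 < p.1 + (b + (p.1 - b) * p.2) := by linarith
  have : 0 < b + (p.1 - b) * p.2 + a := by linarith
  positivity

lemma continuousOn_J5_kernel (hb : 1 < b) :
    ContinuousOn (uncurry fun t u =>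
        √((b + (t - b) * u + a) / ((t + (b + (t - b) * u)) * ((b + (t - b) * u) ^ 2 - 1))))
      (Ici b ×ˢ Ici 0) := by
  refine (ContinuousOn.div (by fun_prop) (by fun_prop) fun p hp => ?_).sqrt
  have hz := one_lt_add_sub_mul hb hp
  have ht : b ≤ p.1 := hp.1
  have : 0 < (b + (p.1 - b) * p.2) ^ 2 - 1 := by nlinarith
  have : 0 < p.1 + (b + (p.1 - b) * p.2) := by linarith
  positivity

end Kernels

/-- As `t → b⁺`, `I₅(a,b;t) → 0` and `J₅(a,b;t) → π √((a+b)/(2b(b²−1)))`. -/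
theorem stmt5 (a b : ℝ) (ha : 1 < a) (hab : a ≤ b) :
    Tendsto (fun t : ℝ => I5 a b t) (𝓝[>] b) (𝓝 0) ∧
    Tendsto (fun t : ℝ => J5 a b t) (𝓝[>] b)
      (𝓝 (π * Real.sqrt ((a + b) / (2 * b * (b ^ 2 - 1))))) := by
  have hb : 1 < b := ha.trans_le hab
  constructor
  · have h :=
      tendsto_integral_mul_inv_sqrt_nhdsGT (continuousOn_I5_kernel (a := a) hb (by linarith))
    simp only [sub_self, zero_mul, zero_div, intervalIntegral.integral_zero] at h
    exact h.congr' (eventually_nhdsWithin_of_forall fun t ht => (I5_eq_integral ht).symm)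
  · have h := tendsto_integral_mul_inv_sqrt_nhdsGT (continuousOn_J5_kernel (a := a) hb)
    simp only [sub_self, zero_mul, add_zero, intervalIntegral.integral_const_mul,
      integral_inv_sqrt_mul_one_sub] at h
    rw [show √((b + a) / ((b + b) * (b ^ 2 - 1))) * π = π * √((a + b) / (2 * b * (b ^ 2 - 1))) by
      ring_nf] at h
    exact h.congr' (eventually_nhdsWithin_of_forall fun t ht => (J5_eq_integral ht).symm)
end

section
/- For all real a, b, t with 1 < a ≤ b < t, one has t·J₅(a,b;t) > log((t + √(t²−b²))/b), where J₅(a,b;t) = ∫_{b}^{t} √((z+a)/((t²−z²)(z²−1)(z−b))) dz. In particular t·J₅(a,b;t) tends to +∞ as t tends to +∞. -/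
open MeasureTheory intervalIntegral Real Filter Topology

/-!
On `(b, t)` one has `(t² - z²)(z² - 1) < t² z² ≤ t² (z + a)(z + b)`, which says exactly that the
integrand of `t·J₅` dominates `1 / √(z² - b²)`. The latter has antiderivative
`log (z + √(z² - b²))`, so its integral over `[b, t]` is `log ((t + √(t² - b²)) / b) ≥ log (t / b)`.
The integrand of `J₅` is integrable: it is a function continuous on `[b, t]` times
`1 / √((z - b)(t - z))`, the derivative of `arcsin ((2z - b - t) / (t - b))`.
-/

open Set

lemma intervalIntegrable_inv_sqrt_mul_sub {b t : ℝ} (hbt : b < t) :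
    IntervalIntegrable (fun z => (√((z - b) * (t - z)))⁻¹) volume b t := by
  have hL : 0 < t - b := sub_pos.2 hbt
  refine (intervalIntegrable_iff_integrableOn_Ioc_of_le hbt.le).2 <|
    integrableOn_deriv_of_nonneg (g := fun z => arcsin ((2 * z - (b + t)) / (t - b)))
      (by fun_prop) (fun z hz => ?_) (fun z _ => by positivity)
  obtain ⟨hbz, hzt⟩ := hz
  have hw : HasDerivAt (fun z => (2 * z - (b + t)) / (t - b)) (2 / (t - b)) z := by
    simpa using (((hasDerivAt_id z).const_mul 2).sub_const (b + t)).div_const (t - b)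
  have h₁ : (2 * z - (b + t)) / (t - b) ≠ -1 := by rw [ne_eq, div_eq_iff hL.ne']; linarith
  have h₂ : (2 * z - (b + t)) / (t - b) ≠ 1 := by rw [ne_eq, div_eq_iff hL.ne']; linarith
  refine ((hasDerivAt_arcsin h₁ h₂).comp z hw).congr_deriv ?_
  have hsq : 1 - ((2 * z - (b + t)) / (t - b)) ^ 2 = (z - b) * (t - z) * (2 / (t - b)) ^ 2 := by
    field_simp; ring
  rw [hsq, sqrt_mul (by nlinarith), sqrt_sq (by positivity)]
  field_simp

lemma sqrt_J5_integrand_eq {a b t z : ℝ} (hz : z ∈ Icc b t) :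
    √((z + a) / ((t ^ 2 - z ^ 2) * (z ^ 2 - 1) * (z - b)))
      = √((z + a) / ((t + z) * (z ^ 2 - 1))) * (√((z - b) * (t - z)))⁻¹ := by
  have hW : 0 ≤ (z - b) * (t - z) := mul_nonneg (sub_nonneg.2 hz.1) (sub_nonneg.2 hz.2)
  rw [← div_eq_mul_inv, ← sqrt_div' _ hW, div_div]
  congr 2
  ring

lemma intervalIntegrable_J5_integrand {a b t : ℝ} (hb : 1 < b) (hbt : b < t) :
    IntervalIntegrable (fun z => √((z + a) / ((t ^ 2 - z ^ 2) * (z ^ 2 - 1) * (z - b))))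
      volume b t := by
  have hcont : ContinuousOn (fun z => √((z + a) / ((t + z) * (z ^ 2 - 1)))) (uIcc b t) := by
    rw [uIcc_of_le hbt.le]
    refine ContinuousOn.sqrt (ContinuousOn.div (by fun_prop) (by fun_prop) fun z hz => ?_)
    have hz1 : 0 < z ^ 2 - 1 := by nlinarith [hz.1]
    have htz : 0 < t + z := by linarith [hz.1]
    positivity
  refine ((intervalIntegrable_inv_sqrt_mul_sub hbt).continuousOn_mul hcont).congr fun z hz => ?_
  rw [uIoc_of_le hbt.le] at hz
  exact (sqrt_J5_integrand_eq ⟨hz.1.le, hz.2⟩).symm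

section inv_sqrt_sq_sub_sq

variable {b t : ℝ}

lemma hasDerivAt_log_add_sqrt_sq_sub_sq {z : ℝ} (hz : 0 < z) (hbz : b ^ 2 < z ^ 2) :
    HasDerivAt (fun z => log (z + √(z ^ 2 - b ^ 2))) (√(z ^ 2 - b ^ 2))⁻¹ z := by
  have hd : 0 < z ^ 2 - b ^ 2 := sub_pos.2 hbz
  have hd' : HasDerivAt (fun z : ℝ => z ^ 2 - b ^ 2) (2 * z) z := by
    simpa using (hasDerivAt_pow 2 z).sub_const (b ^ 2)
  have hsum : HasDerivAt (fun z => z + √(z ^ 2 - b ^ 2)) (1 + 2 * z / (2 * √(z ^ 2 - b ^ 2))) z :=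
    (hasDerivAt_id z).add (hd'.sqrt hd.ne')
  convert hsum.log (by positivity) using 1
  field_simp
  ring

lemma continuousOn_log_add_sqrt_sq_sub_sq (hb : 0 < b) :
    ContinuousOn (fun z => log (z + √(z ^ 2 - b ^ 2))) (Ici b) :=
  ContinuousOn.log (by fun_prop) fun z hz => by
    have : 0 < z := hb.trans_le hz
    positivity

lemma intervalIntegrable_inv_sqrt_sq_sub_sq (hb : 0 < b) (hbt : b ≤ t) :
    IntervalIntegrable (fun z => (√(z ^ 2 - b ^ 2))⁻¹) volume b t :=
  (intervalIntegrable_iff_integrableOn_Ioc_of_le hbt).2 <|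
    integrableOn_deriv_of_nonneg ((continuousOn_log_add_sqrt_sq_sub_sq hb).mono Icc_subset_Ici_self)
      (fun z hz => hasDerivAt_log_add_sqrt_sq_sub_sq (hb.trans hz.1) (by nlinarith [hz.1]))
      (fun z _ => by positivity)

lemma integral_inv_sqrt_sq_sub_sq (hb : 0 < b) (hbt : b ≤ t) :
    ∫ z in b..t, (√(z ^ 2 - b ^ 2))⁻¹ = log ((t + √(t ^ 2 - b ^ 2)) / b) := by
  rw [integral_eq_sub_of_hasDerivAt_of_le hbt
    ((continuousOn_log_add_sqrt_sq_sub_sq hb).mono Icc_subset_Ici_self)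
    (fun z hz => hasDerivAt_log_add_sqrt_sq_sub_sq (hb.trans hz.1) (by nlinarith [hz.1]))
    (intervalIntegrable_inv_sqrt_sq_sub_sq hb hbt)]
  have ht : 0 < t + √(t ^ 2 - b ^ 2) := by have := hb.trans_le hbt; positivity
  simp [log_div ht.ne' hb.ne']

end inv_sqrt_sq_sub_sq

lemma inv_sqrt_sq_sub_sq_lt_mul_J5_integrand {a b t z : ℝ} (ha : 0 ≤ a) (hb : 1 ≤ b)
    (hbz : b < z) (hzt : z < t) :
    (√(z ^ 2 - b ^ 2))⁻¹ < t * √((z + a) / ((t ^ 2 - z ^ 2) * (z ^ 2 - 1) * (z - b))) := by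
  have hz1 : 0 < z ^ 2 - 1 := by nlinarith
  have htz : 0 < t ^ 2 - z ^ 2 := by nlinarith
  have hzb : 0 < z ^ 2 - b ^ 2 := by nlinarith
  have hD : 0 < (t ^ 2 - z ^ 2) * (z ^ 2 - 1) * (z - b) := by
    have := sub_pos.2 hbz; positivity
  have key : (t ^ 2 - z ^ 2) * (z ^ 2 - 1) < t ^ 2 * ((z + a) * (z + b)) :=
    calc (t ^ 2 - z ^ 2) * (z ^ 2 - 1) < t ^ 2 * z ^ 2 := by nlinarith
      _ ≤ t ^ 2 * ((z + a) * (z + b)) := by gcongr; nlinarith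
  have ht : t * √((z + a) / ((t ^ 2 - z ^ 2) * (z ^ 2 - 1) * (z - b)))
      = √(t ^ 2 * ((z + a) / ((t ^ 2 - z ^ 2) * (z ^ 2 - 1) * (z - b)))) := by
    rw [sqrt_mul (sq_nonneg t), sqrt_sq (by linarith)]
  rw [← sqrt_inv, ht]
  apply sqrt_lt_sqrt (inv_nonneg.2 hzb.le)
  rw [inv_eq_one_div, mul_div_assoc', div_lt_div_iff₀ hzb hD]
  nlinarith [mul_lt_mul_of_pos_right key (sub_pos.2 hbz)]

lemma log_lt_mul_J5 {a b t : ℝ} (ha : 0 ≤ a) (hb : 1 < b) (hbt : b < t) :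
    log ((t + √(t ^ 2 - b ^ 2)) / b) < t * J5 a b t := by
  have hb0 : 0 < b := by linarith
  have hg := (intervalIntegrable_J5_integrand (a := a) hb hbt).const_mul t
  have hf := intervalIntegrable_inv_sqrt_sq_sub_sq hb0 hbt.le
  have hpos := intervalIntegral_pos_of_pos_on (hg.sub hf)
    (fun z hz => sub_pos.2 (inv_sqrt_sq_sub_sq_lt_mul_J5_integrand ha hb.le hz.1 hz.2)) hbt
  rw [integral_sub hg hf, intervalIntegral.integral_const_mul,
    integral_inv_sqrt_sq_sub_sq hb0 hbt.le] at hpos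
  rw [J5]
  linarith

lemma tendsto_mul_J5_atTop {a b : ℝ} (ha : 0 ≤ a) (hb : 1 < b) :
    Tendsto (fun t => t * J5 a b t) atTop atTop := by
  have hb0 : 0 < b := by linarith
  refine tendsto_atTop_mono' atTop ?_ (tendsto_log_atTop.comp (tendsto_id.atTop_div_const hb0))
  filter_upwards [eventually_gt_atTop b] with t hbt
  calc log (t / b) ≤ log ((t + √(t ^ 2 - b ^ 2)) / b) := by
        have : 0 < t := hb0.trans hbt
        gcongr
        exact le_add_of_nonneg_right (sqrt_nonneg _)
    _ ≤ t * J5 a b t := (log_lt_mul_J5 ha hb hbt).le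

/-- For all `1 < a ≤ b < t` one has `t·J₅(a,b;t) > log((t + √(t²−b²))/b)`; in particular
`t·J₅(a,b;t) → +∞` as `t → +∞` (for fixed `1 < a ≤ b`). -/
theorem stmt6 :
    (∀ a b t : ℝ, 1 < a → a ≤ b → b < t →
      t * J5 a b t > Real.log ((t + Real.sqrt (t ^ 2 - b ^ 2)) / b)) ∧
    (∀ a b : ℝ, 1 < a → a ≤ b →
      Tendsto (fun t : ℝ => t * J5 a b t) atTop atTop) :=
  ⟨fun _ _ _ ha hab hbt => log_lt_mul_J5 (by linarith) (by linarith) hbt,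
    fun _ _ ha hab => tendsto_mul_J5_atTop (by linarith) (by linarith)⟩
end

section
/- For all real numbers a, b with 1 < a < b, one has f(a,b) > g(a,b), where f(a,b) = ∫_{1}^{a} (2z−a+b)/√((z²−1)(a−z)(b+z)) dz and g(a,b) = ∫_{1}^{b} (2z+a−b)/√((z²−1)(a+z)(b−z)) dz. -/
open MeasureTheory intervalIntegral Real Filter Topology

/-- `f(a,b) = ∫₁ᵃ (2z−a+b)/√((z²−1)(a−z)(b+z)) dz`. -/
noncomputable def f (a b : ℝ) : ℝ :=
  ∫ z in (1:ℝ)..a, (2 * z - a + b) / Real.sqrt ((z ^ 2 - 1) * (a - z) * (b + z))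

/-- `g(a,b) = ∫₁ᵇ (2z+a−b)/√((z²−1)(a+z)(b−z)) dz`. -/
noncomputable def g (a b : ℝ) : ℝ :=
  ∫ z in (1:ℝ)..b, (2 * z + a - b) / Real.sqrt ((z ^ 2 - 1) * (a + z) * (b - z))

/-!
Since `g a b = f b a`, it suffices to compare `f a b` with `f b a`. Splitting off the factor
`√((z - 1)(c - z))` and substituting `z = 1 + (c - 1) sin² θ` removes the singularities and turns
`f c d` into `∫₀^{π/2} 2 fKernel c d (1 + (c - 1) sin² θ) dθ`. With `s = sin² θ`,
`x = 1 + (a - 1)s`, `y = 1 + (b - 1)s` and `e = (b - a)(1 - s) ≥ 0`, the numerator and the factor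
`x + b` of `fKernel a b x` exceed those of `fKernel b a y` by `2e` and `e`, which does not decrease
the kernel, while `x + 1 < y + 1` makes it strictly larger.
-/

open Set

theorem integral_div_sqrt_eq_integral_sin_sq {p q : ℝ} (hpq : p < q) (φ : ℝ → ℝ) :
    ∫ z in p..q, φ z / √((z - p) * (q - z)) =
      ∫ θ in 0..π / 2, 2 * φ (p + (q - p) * sin θ ^ 2) := by
  have hqp : 0 < q - p := sub_pos.2 hpq
  have hpi : (0 : ℝ) ≤ π / 2 := by positivity
  have hderiv (θ : ℝ) :
      HasDerivAt (fun θ ↦ p + (q - p) * sin θ ^ 2) ((q - p) * (2 * sin θ * cos θ)) θ := by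
    simpa using ((hasDerivAt_sin θ).pow 2).const_mul (q - p) |>.const_add p
  have hsin_cos_pos {θ : ℝ} (hθ : θ ∈ Ioo 0 (π / 2)) : 0 < sin θ ∧ 0 < cos θ :=
    ⟨sin_pos_of_pos_of_lt_pi hθ.1 (by linarith [hθ.2, pi_pos]),
      cos_pos_of_mem_Ioo ⟨by linarith [hθ.1, pi_pos], hθ.2⟩⟩
  have hsubst := integral_comp_mul_deriv_of_deriv_nonneg (a := 0) (b := π / 2)
    (g := fun z ↦ φ z / √((z - p) * (q - z))) (by fun_prop) (fun θ _ ↦ hderiv θ) (fun θ hθ ↦ by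
      rw [min_eq_left hpi, max_eq_right hpi] at hθ
      obtain ⟨hs, hc⟩ := hsin_cos_pos hθ
      positivity)
  simp only [sin_zero, sin_pi_div_two, Function.comp_apply] at hsubst
  rw [show p + (q - p) * 0 ^ 2 = p by ring, show p + (q - p) * 1 ^ 2 = q by ring] at hsubst
  rw [← hsubst]
  refine integral_congr_Ioo_of_le hpi fun θ hθ ↦ ?_
  obtain ⟨hs, hc⟩ := hsin_cos_pos hθ
  have hsq : (p + (q - p) * sin θ ^ 2 - p) * (q - (p + (q - p) * sin θ ^ 2)) =
      ((q - p) * sin θ * cos θ) ^ 2 := by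
    linear_combination -(q - p) ^ 2 * sin θ ^ 2 * sin_sq_add_cos_sq θ
  rw [hsq, sqrt_sq (by positivity)]
  field_simp

noncomputable def fKernel (a b x : ℝ) : ℝ := (2 * x - a + b) / √((x + 1) * (x + b))

theorem g_eq_f_swap (a b : ℝ) : g a b = f b a := by
  unfold f g
  congr 1
  ext z
  rw [mul_right_comm _ (a + z), add_comm a z]
  ring_nf

theorem f_eq_integral_fKernel {a : ℝ} (ha : 1 < a) (b : ℝ) :
    f a b = ∫ θ in 0..π / 2, 2 * fKernel a b (1 + (a - 1) * sin θ ^ 2) := by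
  rw [← integral_div_sqrt_eq_integral_sin_sq ha]
  refine integral_congr fun z hz ↦ ?_
  rw [uIcc_of_le ha.le] at hz
  have hfactor : (z ^ 2 - 1) * (a - z) * (b + z) = ((z - 1) * (a - z)) * ((z + 1) * (z + b)) := by
    ring
  rw [fKernel, hfactor, sqrt_mul (mul_nonneg (by linarith [hz.1]) (by linarith [hz.2])), div_div,
    mul_comm (√_)]

theorem continuousOn_fKernel (a : ℝ) {b : ℝ} (hb : -1 < b) :
    ContinuousOn (fKernel a b) (Ici 1) := by
  refine ContinuousOn.div (by fun_prop) (by fun_prop) fun x hx ↦ ?_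
  have : (1 : ℝ) ≤ x := hx
  exact (sqrt_pos.2 (by nlinarith)).ne'

theorem continuous_fKernel_one_add_mul_sin_sq {c d : ℝ} (hc : 1 ≤ c) (hd : -1 < d) :
    Continuous fun θ ↦ 2 * fKernel c d (1 + (c - 1) * sin θ ^ 2) :=
  continuous_const.mul <| (continuousOn_fKernel c hd).comp_continuous
    (f := fun θ ↦ 1 + (c - 1) * sin θ ^ 2) (by fun_prop)
    fun θ ↦ by simp only [mem_Ici]; nlinarith [sq_nonneg (sin θ)]

theorem div_sqrt_le_div_sqrt_add {N B e : ℝ} (hN : 0 ≤ N) (hNB : N ≤ 4 * B) (hB : 0 < B)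
    (he : 0 ≤ e) : N / √B ≤ (N + 2 * e) / √(B + e) := by
  rw [div_le_div_iff₀ (sqrt_pos.2 hB) (sqrt_pos.2 (by linarith)),
    ← pow_le_pow_iff_left₀ (by positivity) (by positivity) two_ne_zero, mul_pow, mul_pow,
    sq_sqrt hB.le, sq_sqrt (by linarith)]
  -- the squared difference is `e * (N * (4 * B - N) + 4 * e * B)`
  nlinarith [mul_nonneg (mul_nonneg he hN) (sub_nonneg.2 hNB), mul_nonneg (mul_nonneg he he) hB.le]

theorem fKernel_swap_lt {a b s : ℝ} (ha : 1 < a) (hab : a < b) (hs₀ : 0 < s) (hs₁ : s ≤ 1) :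
    fKernel b a (1 + (b - 1) * s) < fKernel a b (1 + (a - 1) * s) := by
  set x := 1 + (a - 1) * s with hx
  set y := 1 + (b - 1) * s with hy
  set e := (b - a) * (1 - s) with he
  have hx1 : 1 < x := by nlinarith
  have hxy : x < y := by nlinarith
  have he0 : 0 ≤ e := mul_nonneg (by linarith) (by linarith)
  have hden : x + b = y + a + e := by rw [hx, hy, he]; ring
  have hnum : 2 * x - a + b = 2 * y - b + a + 2 * e := by rw [hx, hy, he]; ring
  rcases le_or_gt (2 * y - b + a) 0 with hN | hN
  · refine (div_nonpos_of_nonpos_of_nonneg hN (sqrt_nonneg _)).trans_lt (div_pos ?_ ?_)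
    · linarith
    · exact sqrt_pos.2 (by nlinarith)
  calc fKernel b a y = (2 * y - b + a) / √(y + a) / √(y + 1) := by
        rw [fKernel, sqrt_mul (by linarith), div_mul_eq_div_div_swap]
    _ ≤ (2 * y - b + a + 2 * e) / √(y + a + e) / √(y + 1) :=
        div_le_div_of_nonneg_right
          (div_sqrt_le_div_sqrt_add hN.le (by linarith) (by linarith) he0) (sqrt_nonneg _)
    _ < (2 * y - b + a + 2 * e) / √(y + a + e) / √(x + 1) := by
        have : 0 < √(y + a + e) := sqrt_pos.2 (by linarith)
        exact div_lt_div_of_pos_left (by positivity) (sqrt_pos.2 (by linarith))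
          (sqrt_lt_sqrt (by linarith) (by linarith))
    _ = fKernel a b x := by
        rw [fKernel, sqrt_mul (by linarith), div_mul_eq_div_div_swap, hden, hnum]

/-- For all `1 < a < b` one has `f(a,b) > g(a,b)`. -/
theorem stmt8 (a b : ℝ) (ha : 1 < a) (hab : a < b) : f a b > g a b := by
  have hb : 1 < b := ha.trans hab
  rw [gt_iff_lt, g_eq_f_swap, f_eq_integral_fKernel hb, f_eq_integral_fKernel ha]
  have hlt {θ : ℝ} (hθ : θ ∈ Ioc 0 (π / 2)) :
      2 * fKernel b a (1 + (b - 1) * sin θ ^ 2) < 2 * fKernel a b (1 + (a - 1) * sin θ ^ 2) := by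
    have hsin : 0 < sin θ := sin_pos_of_pos_of_lt_pi hθ.1 (by linarith [hθ.2, pi_pos])
    gcongr
    exact fKernel_swap_lt ha hab (by positivity) (sin_sq_le_one θ)
  exact integral_lt_integral_of_continuousOn_of_le_of_exists_lt (by positivity)
    (continuous_fKernel_one_add_mul_sin_sq hb.le (by linarith)).continuousOn
    (continuous_fKernel_one_add_mul_sin_sq ha.le (by linarith)).continuousOn
    (fun θ hθ ↦ (hlt hθ).le)
    ⟨π / 2, right_mem_Icc.2 (by positivity), hlt (right_mem_Ioc.2 (by positivity))⟩
end

section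
/- Fix a real number a > 1. The function b ↦ f(a,b) is strictly increasing on [a, ∞), i.e., for all real b, b' with a ≤ b < b' one has f(a,b) < f(a,b'), where f(a,b) = ∫_{1}^{a} (2z−a+b)/√((z²−1)(a−z)(b+z)) dz. -/
/-!
With `u = b + z` the numerator is `u - (a - z)`, so the integrand equals
`(√u - (a - z) / √u) / √((z² - 1)(a - z))`, which is strictly increasing in `u` for each
`z ∈ (1, a)`. Both integrands are integrable: they are continuous multiples of the weight
`1 / √((z - 1)(a - z))`, the derivative of `arcsin ((2z - 1 - a) / (a - 1))`.
-/

open MeasureTheory intervalIntegral Real Filter Topology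

open Set

lemma sub_div_sqrt_strictMonoOn {d : ℝ} (hd : 0 ≤ d) :
    StrictMonoOn (fun u : ℝ => (u - d) / √u) (Ioi 0) := by
  intro u (hu : 0 < u) v _ huv
  have split : ∀ w : ℝ, 0 < w → (w - d) / √w = √w - d / √w := fun w hw => by
    rw [sub_div, div_sqrt]
  simp only [split u hu, split v (hu.trans huv)]
  exact (sub_lt_sub_right (sqrt_lt_sqrt hu.le huv) _).trans_le
    (sub_le_sub_left (div_le_div_of_nonneg_left hd (sqrt_pos.2 hu) (sqrt_le_sqrt huv.le)) _)

lemma hasDerivAt_arcsin_affine {p q z : ℝ} (hz : z ∈ Ioo p q) :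
    HasDerivAt (fun x => arcsin ((2 * x - p - q) / (q - p))) (√((z - p) * (q - z)))⁻¹ z := by
  obtain ⟨hpz, hzq⟩ := hz
  have hqp : 0 < q - p := by linarith
  have hu : ((2 * z - p - q) / (q - p)) ^ 2 < 1 := by
    rw [div_pow, div_lt_one (by positivity)]; nlinarith
  have hlin : HasDerivAt (fun x => (2 * x - p - q) / (q - p)) (2 / (q - p)) z := by
    simpa using (((hasDerivAt_id z).const_mul 2).sub_const p |>.sub_const q).div_const (q - p)
  refine ((hasDerivAt_arcsin (by nlinarith) (by nlinarith)).comp z hlin).congr_deriv ?_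
  have h1 : 1 - ((2 * z - p - q) / (q - p)) ^ 2 = (2 / (q - p)) ^ 2 * ((z - p) * (q - z)) := by
    field_simp; ring
  rw [h1, sqrt_mul (by positivity), sqrt_sq (by positivity)]
  field_simp

lemma intervalIntegrable_inv_sqrt_sub_mul_sub {p q : ℝ} (hpq : p < q) :
    IntervalIntegrable (fun z => (√((z - p) * (q - z)))⁻¹) volume p q := by
  apply intervalIntegrable_deriv_of_nonneg (g := fun x => arcsin ((2 * x - p - q) / (q - p)))
  · fun_prop
  · intro z hz
    rw [min_eq_left hpq.le, max_eq_right hpq.le] at hz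
    exact hasDerivAt_arcsin_affine hz
  · intros; positivity

noncomputable def fIntegrand (a b z : ℝ) : ℝ :=
  (2 * z - a + b) / √((z ^ 2 - 1) * (a - z) * (b + z))

lemma fIntegrand_eq {a b z : ℝ} (hz : z ∈ Icc 1 a) :
    fIntegrand a b z = (√((z - 1) * (a - z)))⁻¹ * ((2 * z - a + b) / √((z + 1) * (b + z))) := by
  have hw : 0 ≤ (z - 1) * (a - z) := mul_nonneg (by linarith [hz.1]) (by linarith [hz.2])
  rw [fIntegrand, show (z ^ 2 - 1) * (a - z) * (b + z) = (z - 1) * (a - z) * ((z + 1) * (b + z))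
    by ring, sqrt_mul hw, div_mul_eq_div_div_swap, div_eq_inv_mul]

lemma intervalIntegrable_fIntegrand {a b : ℝ} (ha : 1 < a) (hb : -1 < b) :
    IntervalIntegrable (fIntegrand a b) volume 1 a := by
  have hcont : ContinuousOn (fun z => (2 * z - a + b) / √((z + 1) * (b + z))) (uIcc 1 a) := by
    rw [uIcc_of_le ha.le]
    refine ContinuousOn.div (by fun_prop) (by fun_prop) fun z hz => ?_
    have : 0 < (z + 1) * (b + z) := mul_pos (by linarith [hz.1]) (by linarith [hz.1])
    positivity
  refine ((intervalIntegrable_inv_sqrt_sub_mul_sub ha).mul_continuousOn hcont).congr fun z hz => ?_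
  rw [uIoc_of_le ha.le] at hz
  exact (fIntegrand_eq (Ioc_subset_Icc_self hz)).symm

lemma fIntegrand_lt_of_lt {a b b' z : ℝ} (hz : z ∈ Ioo 1 a) (hb : -z < b) (hbb' : b < b') :
    fIntegrand a b z < fIntegrand a b' z := by
  obtain ⟨h1z, hza⟩ := hz
  have hc : 0 < (z ^ 2 - 1) * (a - z) := mul_pos (by nlinarith) (by linarith)
  have key : ∀ c, fIntegrand a c z = ((c + z) - (a - z)) / √(c + z) / √((z ^ 2 - 1) * (a - z)) :=
    fun c => by rw [fIntegrand, sqrt_mul hc.le, div_mul_eq_div_div_swap]; congr 2; ring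
  rw [key, key]
  refine div_lt_div_of_pos_right ?_ (sqrt_pos.2 hc)
  exact sub_div_sqrt_strictMonoOn (d := a - z) (by linarith) (show 0 < b + z by linarith)
    (show 0 < b' + z by linarith) (by linarith)

/-- For fixed `a > 1`, `b ↦ f(a,b)` is strictly increasing on `[a, ∞)`. -/
theorem stmt10 (a : ℝ) (ha : 1 < a) :
    ∀ b b' : ℝ, a ≤ b → b < b' → f a b < f a b' := by
  intro b b' hab hbb'
  have hb : -1 < b := by linarith
  have hi := intervalIntegrable_fIntegrand ha hb
  have hi' := intervalIntegrable_fIntegrand ha (hb.trans hbb')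
  rw [← sub_pos]
  change 0 < (∫ z in (1:ℝ)..a, fIntegrand a b' z) - ∫ z in (1:ℝ)..a, fIntegrand a b z
  rw [← integral_sub hi' hi]
  refine intervalIntegral_pos_of_pos_on (hi'.sub hi) (fun z hz => sub_pos.2 ?_) ha
  exact fIntegrand_lt_of_lt hz (by linarith [hz.1]) hbb'
end

section
/- Let a, b, t, ρ be real numbers with 1 < a ≤ b < t and ρ > 0. Consider the following eight points of ℝ³: P₁^± = (∓2ρ√((a+1)(b−1)), 0, ρ²(b−1)−(a+1)) / (ρ²(b−1)+(a+1)); P₂^± = (∓2ρ√((a−1)(b+1)), 0, ρ²(b+1)−(a−1)) / (ρ²(b+1)+(a−1)); P₃^± = (0, ±2ρ√((t+a)(t−b)), ρ²(t−b)−(t+a)) / (ρ²(t−b)+(t+a)); P₄^± = (0, ±2ρ√((t−a)(t+b)), ρ²(t+b)−(t−a)) / (ρ²(t+b)+(t−a)). Then the set of these eight points is invariant under the antipodal map x ↦ −x (i.e., the eight points form four antipodal pairs) if and only if a = b and ρ = 1. -/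
open Real

set_option maxHeartbeats 2000000 in
/-- The eight stereographic projections of the branched values of the Gauss map form
four antipodal pairs if and only if `a = b` and `ρ = 1`. -/
theorem stmt12 (a b t ρ : ℝ) (ha : 1 < a) (hab : a ≤ b) (hbt : b < t) (hρ : 0 < ρ)
    (P1p P1m P2p P2m P3p P3m P4p P4m : ℝ × ℝ × ℝ)
    (hP1p : P1p = (-(2 * ρ * Real.sqrt ((a + 1) * (b - 1))) / (ρ ^ 2 * (b - 1) + (a + 1)),
      0, (ρ ^ 2 * (b - 1) - (a + 1)) / (ρ ^ 2 * (b - 1) + (a + 1))))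
    (hP1m : P1m = ((2 * ρ * Real.sqrt ((a + 1) * (b - 1))) / (ρ ^ 2 * (b - 1) + (a + 1)),
      0, (ρ ^ 2 * (b - 1) - (a + 1)) / (ρ ^ 2 * (b - 1) + (a + 1))))
    (hP2p : P2p = (-(2 * ρ * Real.sqrt ((a - 1) * (b + 1))) / (ρ ^ 2 * (b + 1) + (a - 1)),
      0, (ρ ^ 2 * (b + 1) - (a - 1)) / (ρ ^ 2 * (b + 1) + (a - 1))))
    (hP2m : P2m = ((2 * ρ * Real.sqrt ((a - 1) * (b + 1))) / (ρ ^ 2 * (b + 1) + (a - 1)),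
      0, (ρ ^ 2 * (b + 1) - (a - 1)) / (ρ ^ 2 * (b + 1) + (a - 1))))
    (hP3p : P3p = (0, (2 * ρ * Real.sqrt ((t + a) * (t - b))) / (ρ ^ 2 * (t - b) + (t + a)),
      (ρ ^ 2 * (t - b) - (t + a)) / (ρ ^ 2 * (t - b) + (t + a))))
    (hP3m : P3m = (0, -(2 * ρ * Real.sqrt ((t + a) * (t - b))) / (ρ ^ 2 * (t - b) + (t + a)),
      (ρ ^ 2 * (t - b) - (t + a)) / (ρ ^ 2 * (t - b) + (t + a))))
    (hP4p : P4p = (0, (2 * ρ * Real.sqrt ((t - a) * (t + b))) / (ρ ^ 2 * (t + b) + (t - a)),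
      (ρ ^ 2 * (t + b) - (t - a)) / (ρ ^ 2 * (t + b) + (t - a))))
    (hP4m : P4m = (0, -(2 * ρ * Real.sqrt ((t - a) * (t + b))) / (ρ ^ 2 * (t + b) + (t - a)),
      (ρ ^ 2 * (t + b) - (t - a)) / (ρ ^ 2 * (t + b) + (t - a)))) :
    (∀ p ∈ ({P1p, P1m, P2p, P2m, P3p, P3m, P4p, P4m} : Set (ℝ × ℝ × ℝ)),
      -p ∈ ({P1p, P1m, P2p, P2m, P3p, P3m, P4p, P4m} : Set (ℝ × ℝ × ℝ)))
      ↔ (a = b ∧ ρ = 1) := by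
  subst hP1p hP1m hP2p hP2m hP3p hP3m hP4p hP4m
  have ha1 : (0:ℝ) < a - 1 := by linarith
  have hb1 : (0:ℝ) < b - 1 := by linarith
  have htb : (0:ℝ) < t - b := by linarith
  have hta : (0:ℝ) < t - a := by linarith
  have hsq : (0:ℝ) < ρ ^ 2 := by positivity
  have hD1 : (0:ℝ) < ρ ^ 2 * (b - 1) + (a + 1) := by nlinarith
  have hD2 : (0:ℝ) < ρ ^ 2 * (b + 1) + (a - 1) := by nlinarith
  have hD3 : (0:ℝ) < ρ ^ 2 * (t - b) + (t + a) := by nlinarith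
  have hD4 : (0:ℝ) < ρ ^ 2 * (t + b) + (t - a) := by nlinarith
  have hx1 : (0:ℝ) < 2 * ρ * Real.sqrt ((a + 1) * (b - 1)) / (ρ ^ 2 * (b - 1) + (a + 1)) := by
    have := Real.sqrt_pos.mpr (show (0:ℝ) < (a + 1) * (b - 1) by nlinarith)
    positivity
  have hx2 : (0:ℝ) < 2 * ρ * Real.sqrt ((a - 1) * (b + 1)) / (ρ ^ 2 * (b + 1) + (a - 1)) := by
    have := Real.sqrt_pos.mpr (show (0:ℝ) < (a - 1) * (b + 1) by nlinarith)
    positivity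
  have hx3 : (0:ℝ) < 2 * ρ * Real.sqrt ((t + a) * (t - b)) / (ρ ^ 2 * (t - b) + (t + a)) := by
    have := Real.sqrt_pos.mpr (show (0:ℝ) < (t + a) * (t - b) by nlinarith)
    positivity
  have hx4 : (0:ℝ) < 2 * ρ * Real.sqrt ((t - a) * (t + b)) / (ρ ^ 2 * (t + b) + (t - a)) := by
    have := Real.sqrt_pos.mpr (show (0:ℝ) < (t - a) * (t + b) by nlinarith)
    positivity
  constructor
  · intro h
    have h1 := h _ (Set.mem_insert _ _)
    have h2 := h _ (Set.mem_insert_of_mem _ (Set.mem_insert_of_mem _ (Set.mem_insert _ _)))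
    have h3 := h _ (Set.mem_insert_of_mem _ (Set.mem_insert_of_mem _ (Set.mem_insert_of_mem _
      (Set.mem_insert_of_mem _ (Set.mem_insert _ _)))))
    have h4 := h _ (Set.mem_insert_of_mem _ (Set.mem_insert_of_mem _ (Set.mem_insert_of_mem _
      (Set.mem_insert_of_mem _ (Set.mem_insert_of_mem _ (Set.mem_insert_of_mem _
      (Set.mem_insert _ _)))))))
    simp only [Set.mem_insert_iff, Set.mem_singleton_iff, Prod.neg_mk, Prod.mk.injEq, neg_zero,
      neg_neg, neg_div] at h1 h2 h3 h4
    have F1 : ρ ^ 2 * (b - 1) - (a + 1) = 0 ∨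
        (ρ ^ 2 * (b - 1) - (a + 1)) * (ρ ^ 2 * (b + 1) + (a - 1)) +
          (ρ ^ 2 * (b + 1) - (a - 1)) * (ρ ^ 2 * (b - 1) + (a + 1)) = 0 := by
      rcases h1 with ⟨e1, -, -⟩ | ⟨-, -, e3⟩ | ⟨e1, -, -⟩ | ⟨-, -, e3⟩ |
          ⟨e1, -, -⟩ | ⟨e1, -, -⟩ | ⟨e1, -, -⟩ | ⟨e1, -, -⟩
      · exfalso; linarith
      · left
        have q0 : (ρ ^ 2 * (b - 1) - (a + 1)) / (ρ ^ 2 * (b - 1) + (a + 1)) = 0 := by linarith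
        exact (div_eq_zero_iff.mp q0).resolve_right hD1.ne'
      · exfalso; linarith
      · right
        rw [← neg_div, div_eq_div_iff hD1.ne' hD2.ne'] at e3
        linear_combination -e3
      · exfalso; linarith
      · exfalso; linarith
      · exfalso; linarith
      · exfalso; linarith
    have F2 : ρ ^ 2 * (b + 1) - (a - 1) = 0 ∨
        (ρ ^ 2 * (b - 1) - (a + 1)) * (ρ ^ 2 * (b + 1) + (a - 1)) +
          (ρ ^ 2 * (b + 1) - (a - 1)) * (ρ ^ 2 * (b - 1) + (a + 1)) = 0 := by
      rcases h2 with ⟨e1, -, -⟩ | ⟨-, -, e3⟩ | ⟨e1, -, -⟩ | ⟨-, -, e3⟩ |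
          ⟨e1, -, -⟩ | ⟨e1, -, -⟩ | ⟨e1, -, -⟩ | ⟨e1, -, -⟩
      · exfalso; linarith
      · right
        rw [← neg_div, div_eq_div_iff hD2.ne' hD1.ne'] at e3
        linear_combination -e3
      · exfalso; linarith
      · left
        have q0 : (ρ ^ 2 * (b + 1) - (a - 1)) / (ρ ^ 2 * (b + 1) + (a - 1)) = 0 := by linarith
        exact (div_eq_zero_iff.mp q0).resolve_right hD2.ne'
      · exfalso; linarith
      · exfalso; linarith
      · exfalso; linarith
      · exfalso; linarith
    have F3 : ρ ^ 2 * (t - b) - (t + a) = 0 ∨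
        (ρ ^ 2 * (t - b) - (t + a)) * (ρ ^ 2 * (t + b) + (t - a)) +
          (ρ ^ 2 * (t + b) - (t - a)) * (ρ ^ 2 * (t - b) + (t + a)) = 0 := by
      rcases h3 with ⟨e1, -, -⟩ | ⟨e1, -, -⟩ | ⟨e1, -, -⟩ | ⟨e1, -, -⟩ |
          ⟨-, e2, -⟩ | ⟨-, -, e3⟩ | ⟨-, e2, -⟩ | ⟨-, -, e3⟩
      · exfalso; linarith
      · exfalso; linarith
      · exfalso; linarith
      · exfalso; linarith
      · exfalso; linarith
      · left
        have q0 : (ρ ^ 2 * (t - b) - (t + a)) / (ρ ^ 2 * (t - b) + (t + a)) = 0 := by linarith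
        exact (div_eq_zero_iff.mp q0).resolve_right hD3.ne'
      · exfalso; linarith
      · right
        rw [← neg_div, div_eq_div_iff hD3.ne' hD4.ne'] at e3
        linear_combination -e3
    have F4 : ρ ^ 2 * (t + b) - (t - a) = 0 ∨
        (ρ ^ 2 * (t - b) - (t + a)) * (ρ ^ 2 * (t + b) + (t - a)) +
          (ρ ^ 2 * (t + b) - (t - a)) * (ρ ^ 2 * (t - b) + (t + a)) = 0 := by
      rcases h4 with ⟨e1, -, -⟩ | ⟨e1, -, -⟩ | ⟨e1, -, -⟩ | ⟨e1, -, -⟩ |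
          ⟨-, e2, -⟩ | ⟨-, -, e3⟩ | ⟨-, e2, -⟩ | ⟨-, -, e3⟩
      · exfalso; linarith
      · exfalso; linarith
      · exfalso; linarith
      · exfalso; linarith
      · exfalso; linarith
      · right
        rw [← neg_div, div_eq_div_iff hD4.ne' hD3.ne'] at e3
        linear_combination -e3
      · exfalso; linarith
      · left
        have q0 : (ρ ^ 2 * (t + b) - (t - a)) / (ρ ^ 2 * (t + b) + (t - a)) = 0 := by linarith
        exact (div_eq_zero_iff.mp q0).resolve_right hD4.ne'
    have G1 : ρ ^ 2 * ρ ^ 2 * ((b - 1) * (b + 1)) = (a + 1) * (a - 1) := by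
      rcases F1 with e | e
      · rcases F2 with f | f
        · exfalso
          have : ρ ^ 2 + 1 = 0 := by linear_combination (f - e) / 2
          nlinarith
        · linear_combination f / 2
      · linear_combination e / 2
    have G2 : ρ ^ 2 * ρ ^ 2 * ((t - b) * (t + b)) = (t + a) * (t - a) := by
      rcases F3 with e | e
      · rcases F4 with f | f
        · exfalso
          have : ρ ^ 2 * b + a = 0 := by linear_combination (f - e) / 2
          nlinarith
        · linear_combination f / 2
      · linear_combination e / 2
    have hu : ρ ^ 2 = 1 := by
      have key : (ρ ^ 2 * ρ ^ 2 - 1) * (t ^ 2 - 1) = 0 := by linear_combination G1 + G2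
      rcases mul_eq_zero.mp key with k | k
      · have key2 : (ρ ^ 2 - 1) * (ρ ^ 2 + 1) = 0 := by linear_combination k
        rcases mul_eq_zero.mp key2 with k2 | k2
        · linarith
        · exfalso; nlinarith
      · exfalso; nlinarith
    have hρ1 : ρ = 1 := by
      have key : (ρ - 1) * (ρ + 1) = 0 := by linear_combination hu
      rcases mul_eq_zero.mp key with k | k
      · linarith
      · exfalso; linarith
    refine ⟨?_, hρ1⟩
    rw [hu] at G1
    have key : (b - a) * (b + a) = 0 := by linear_combination G1
    rcases mul_eq_zero.mp key with k | k
    · linarith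
    · exfalso; linarith
  · rintro ⟨rfl, rfl⟩
    intro p hp
    simp only [Set.mem_insert_iff, Set.mem_singleton_iff] at hp ⊢
    have hc1 : (a + 1) * (a - 1) = (a - 1) * (a + 1) := mul_comm _ _
    have hc3 : (t + a) * (t - a) = (t - a) * (t + a) := mul_comm _ _
    have hd1 : (1:ℝ) ^ 2 * (a - 1) + (a + 1) ≠ 0 := ne_of_gt (by nlinarith)
    have hd2 : (1:ℝ) ^ 2 * (a + 1) + (a - 1) ≠ 0 := ne_of_gt (by nlinarith)
    have hd3 : (1:ℝ) ^ 2 * (t - a) + (t + a) ≠ 0 := ne_of_gt (by nlinarith)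
    have hd4 : (1:ℝ) ^ 2 * (t + a) + (t - a) ≠ 0 := ne_of_gt (by nlinarith)
    rcases hp with rfl | rfl | rfl | rfl | rfl | rfl | rfl | rfl
    · refine Or.inr (Or.inr (Or.inr (Or.inl ?_)))
      simp only [Prod.neg_mk, Prod.mk.injEq, neg_zero, neg_neg, neg_div]
      rw [hc1]
      refine ⟨?_, trivial, ?_⟩
      · rw [div_eq_div_iff hd1 hd2]; ring
      · rw [← neg_div, div_eq_div_iff hd1 hd2]; ring
    · refine Or.inr (Or.inr (Or.inl ?_))
      simp only [Prod.neg_mk, Prod.mk.injEq, neg_zero, neg_neg, neg_div]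
      rw [hc1]
      refine ⟨?_, trivial, ?_⟩
      · rw [neg_inj, div_eq_div_iff hd1 hd2]; ring
      · rw [← neg_div, div_eq_div_iff hd1 hd2]; ring
    · refine Or.inr (Or.inl ?_)
      simp only [Prod.neg_mk, Prod.mk.injEq, neg_zero, neg_neg, neg_div]
      rw [hc1]
      refine ⟨?_, trivial, ?_⟩
      · rw [div_eq_div_iff hd2 hd1]; ring
      · rw [← neg_div, div_eq_div_iff hd2 hd1]; ring
    · refine Or.inl ?_
      simp only [Prod.neg_mk, Prod.mk.injEq, neg_zero, neg_neg, neg_div]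
      rw [hc1]
      refine ⟨?_, trivial, ?_⟩
      · rw [neg_inj, div_eq_div_iff hd2 hd1]; ring
      · rw [← neg_div, div_eq_div_iff hd2 hd1]; ring
    · refine Or.inr (Or.inr (Or.inr (Or.inr (Or.inr (Or.inr (Or.inr ?_))))))
      simp only [Set.mem_singleton_iff, Prod.neg_mk, Prod.mk.injEq, neg_zero, neg_neg, neg_div]
      rw [hc3]
      refine ⟨trivial, ?_, ?_⟩
      · rw [neg_inj, div_eq_div_iff hd3 hd4]; ring
      · rw [← neg_div, div_eq_div_iff hd3 hd4]; ring
    · refine Or.inr (Or.inr (Or.inr (Or.inr (Or.inr (Or.inr (Or.inl ?_))))))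
      simp only [Prod.neg_mk, Prod.mk.injEq, neg_zero, neg_neg, neg_div]
      rw [hc3]
      refine ⟨trivial, ?_, ?_⟩
      · rw [div_eq_div_iff hd3 hd4]; ring
      · rw [← neg_div, div_eq_div_iff hd3 hd4]; ring
    · refine Or.inr (Or.inr (Or.inr (Or.inr (Or.inr (Or.inl ?_)))))
      simp only [Prod.neg_mk, Prod.mk.injEq, neg_zero, neg_neg, neg_div]
      rw [hc3]
      refine ⟨trivial, ?_, ?_⟩
      · rw [neg_inj, div_eq_div_iff hd4 hd3]; ring
      · rw [← neg_div, div_eq_div_iff hd4 hd3]; ring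
    · refine Or.inr (Or.inr (Or.inr (Or.inr (Or.inl ?_))))
      simp only [Prod.neg_mk, Prod.mk.injEq, neg_zero, neg_neg, neg_div]
      rw [hc3]
      refine ⟨trivial, ?_, ?_⟩
      · rw [div_eq_div_iff hd4 hd3]; ring
      · rw [← neg_div, div_eq_div_iff hd4 hd3]; ring
end
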